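/- arXiv:2312.07930 — 12 statements merged into one kernel-verified Lean document; each statement's English description precedes it below -/
import Mathlib

section
/- Let Ω be a finite nonempty set, ρ a probability distribution on Ω, ε ≥ 0 and α ∈ [0,1]. Every ε-distorted watermarking scheme 𝒫 of ρ with Type I error α(𝒫) ≤ α has Type II error β(𝒫) ≥ min{ Σ_{x∈Ω} (ρ'(x) − α)_+ : ρ' a probability distribution on Ω with TV(ρ', ρ) ≤ ε }. -/
/-!
The marginal law of `X` is itself an admissible `ρ'`. For each `x`, the mass `P(X = x, x ∈ R)`
is at most the Type I error `P(x ∈ R) ≤ α`, so `(P(X = x) - α)₊ ≤ P(X = x, x ∉ R)`; summing over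
`x` bounds the objective at this `ρ'` by the Type II error.
-/

open Finset

noncomputable section

/-- The marginal distribution of the output `X` under a joint distribution `P`
on `Ω × 2^Ω`. -/
def marginalX {Ω : Type*} [Fintype Ω] [DecidableEq Ω]
    (P : Ω × Finset Ω → ℝ) (x : Ω) : ℝ :=
  ∑ R : Finset Ω, P (x, R)

/-- Total variation distance between two (finitely supported) distributions. -/
def tvDist {Ω : Type*} [Fintype Ω] (μ ν : Ω → ℝ) : ℝ :=
  (∑ x, |μ x - ν x|) / 2

/-- Type II error of a watermarking scheme: the probability that `X ∉ R`. -/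
def typeII {Ω : Type*} [Fintype Ω] [DecidableEq Ω]
    (P : Ω × Finset Ω → ℝ) : ℝ :=
  ∑ p : Ω × Finset Ω, if p.1 ∉ p.2 then P p else 0

namespace Watermark

variable {Ω : Type*} [Fintype Ω] [DecidableEq Ω] (P : Ω × Finset Ω → ℝ)

theorem sum_marginalX : ∑ x, marginalX P x = ∑ p, P p :=
  (Fintype.sum_prod_type P).symm

theorem marginalX_nonneg (hP0 : ∀ p, 0 ≤ P p) (x : Ω) : 0 ≤ marginalX P x :=
  sum_nonneg fun _ _ => hP0 _

theorem typeII_eq_sum : typeII P = ∑ x, ∑ R, if x ∉ R then P (x, R) else 0 :=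
  Fintype.sum_prod_type _

theorem marginalX_eq_sum_mem_add_sum_notMem (x : Ω) :
    marginalX P x = (∑ R, if x ∈ R then P (x, R) else 0) + ∑ R, if x ∉ R then P (x, R) else 0 := by
  rw [marginalX, ← sum_add_distrib]
  refine sum_congr rfl fun R _ => ?_
  by_cases h : x ∈ R <;> simp [h]

theorem sum_ite_mem_fiber_le_sum_ite_mem (hP0 : ∀ p, 0 ≤ P p) (x : Ω) :
    (∑ R, if x ∈ R then P (x, R) else 0) ≤ ∑ p : Ω × Finset Ω, if x ∈ p.2 then P p else 0 := by
  rw [Fintype.sum_prod_type]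
  exact single_le_sum (f := fun x' => ∑ R : Finset Ω, if x ∈ R then P (x', R) else 0)
    (fun _ _ => sum_nonneg fun _ _ => ite_nonneg (hP0 _) le_rfl) (mem_univ x)

theorem sum_max_marginalX_sub_le_typeII (hP0 : ∀ p, 0 ≤ P p) {α : ℝ}
    (htypeI : ∀ y : Ω, (∑ p : Ω × Finset Ω, if y ∈ p.2 then P p else 0) ≤ α) :
    ∑ x, max (marginalX P x - α) 0 ≤ typeII P := by
  rw [typeII_eq_sum]
  refine sum_le_sum fun x _ => max_le ?_ (sum_nonneg fun R _ => ite_nonneg (hP0 _) le_rfl)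
  have hmem := (sum_ite_mem_fiber_le_sum_ite_mem P hP0 x).trans (htypeI x)
  linarith [marginalX_eq_sum_mem_add_sum_notMem P x]

end Watermark

open Watermark

theorem stmt_0_general {Ω : Type*} [Fintype Ω] [DecidableEq Ω]
    (ρ : Ω → ℝ) (ε : ℝ) (α : ℝ)
    (P : Ω × Finset Ω → ℝ) (hP0 : ∀ p, 0 ≤ P p) (hP1 : ∑ p, P p = 1)
    (hdist : tvDist (marginalX P) ρ ≤ ε)
    (htypeI : ∀ y : Ω, (∑ p : Ω × Finset Ω, if y ∈ p.2 then P p else 0) ≤ α) :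
    sInf {s : ℝ | ∃ ρ' : Ω → ℝ, (∀ x, 0 ≤ ρ' x) ∧ (∑ x, ρ' x = 1) ∧
        tvDist ρ' ρ ≤ ε ∧ s = ∑ x, max (ρ' x - α) 0}
      ≤ typeII P := by
  have hbdd : BddBelow {s : ℝ | ∃ ρ' : Ω → ℝ, (∀ x, 0 ≤ ρ' x) ∧ (∑ x, ρ' x = 1) ∧
      tvDist ρ' ρ ≤ ε ∧ s = ∑ x, max (ρ' x - α) 0} := by
    refine ⟨0, ?_⟩
    rintro _ ⟨ρ', -, -, -, rfl⟩
    exact sum_nonneg fun x _ => le_max_right _ _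
  have hmarginal_mem : ∃ ρ' : Ω → ℝ, (∀ x, 0 ≤ ρ' x) ∧ (∑ x, ρ' x = 1) ∧
      tvDist ρ' ρ ≤ ε ∧ ∑ x, max (marginalX P x - α) 0 = ∑ x, max (ρ' x - α) 0 :=
    ⟨marginalX P, marginalX_nonneg P hP0, (sum_marginalX P).trans hP1, hdist, rfl⟩
  exact (csInf_le hbdd hmarginal_mem).trans (sum_max_marginalX_sub_le_typeII P hP0 htypeI)

/-- Every `ε`-distorted watermarking scheme of `ρ` with Type I error at most `α`
has Type II error at least
`min { ∑_x (ρ'(x) − α)₊ : ρ' a probability distribution with TV(ρ', ρ) ≤ ε }`. -/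
theorem stmt_0 {Ω : Type*} [Fintype Ω] [DecidableEq Ω] [Nonempty Ω]
    (ρ : Ω → ℝ) (hρ0 : ∀ x, 0 ≤ ρ x) (hρ1 : ∑ x, ρ x = 1)
    (ε : ℝ) (hε : 0 ≤ ε) (α : ℝ) (hα : α ∈ Set.Icc (0 : ℝ) 1)
    (P : Ω × Finset Ω → ℝ) (hP0 : ∀ p, 0 ≤ P p) (hP1 : ∑ p, P p = 1)
    (hdist : tvDist (marginalX P) ρ ≤ ε)
    (htypeI : ∀ y : Ω, (∑ p : Ω × Finset Ω, if y ∈ p.2 then P p else 0) ≤ α) :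
    sInf {s : ℝ | ∃ ρ' : Ω → ℝ, (∀ x, 0 ≤ ρ' x) ∧ (∑ x, ρ' x = 1) ∧
        tvDist ρ' ρ ≤ ε ∧ s = ∑ x, max (ρ' x - α) 0}
      ≤ typeII P :=
  stmt_0_general ρ ε α P hP0 hP1 hdist htypeI
end
end

section
/- Let Ω be a finite nonempty set, ρ a probability distribution on Ω, ε ≥ 0 and α ∈ [0,1]. Let ρ* be any minimizer of Σ_{x∈Ω}(ρ'(x) − α)_+ over probability distributions ρ' on Ω with TV(ρ', ρ) ≤ ε. Then the joint distribution 𝒫* on Ω × 2^Ω defined by 𝒫*(X = x, R = {x}) = min(ρ*(x), α), 𝒫*(X = x, R = ∅) = (ρ*(x) − α)_+, and 𝒫*(X = x, R = R₀) = 0 for all other R₀, is an ε-distorted watermarking scheme of ρ with Type I error at most α and Type II error equal to Σ_{x∈Ω}(ρ*(x) − α)_+ = min{ Σ_{x∈Ω}(ρ'(x) − α)_+ : TV(ρ', ρ) ≤ ε }. -/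
/-!
Each output `x` carries the mass `ρ*(x) = min (ρ*(x), α) + (ρ*(x) - α)₊`, split between the
rejection regions `{x}` and `∅`. Hence the marginal of `X` is `ρ*` itself (so the distortion is
`TV(ρ*, ρ) ≤ ε`), the only region containing `y` is `{y}`, of mass `min (ρ*(y), α) ≤ α`, and
`X ∉ R` happens exactly on the `∅` part. Since `ρ*` attains the minimum, the infimum equals it.
-/

open Finset

noncomputable section

theorem min_add_max_sub_zero {G : Type*} [AddCommGroup G] [LinearOrder G] [IsOrderedAddMonoid G]
    (a b : G) : min a b + max (a - b) 0 = a := by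
  rw [← sub_self b, max_sub_sub_right, ← add_sub_assoc, min_add_max, add_sub_cancel_right]

/-- The scheme `𝒫*` of the paper, built from `ρ* = q`. -/
def thresholdScheme {Ω : Type*} [DecidableEq Ω] (q : Ω → ℝ) (α : ℝ) (p : Ω × Finset Ω) : ℝ :=
  if p.2 = {p.1} then min (q p.1) α
  else if p.2 = ∅ then max (q p.1 - α) 0
  else 0

section thresholdScheme

variable {Ω : Type*} [DecidableEq Ω] (q : Ω → ℝ) (α : ℝ)

lemma thresholdScheme_nonneg (hq : ∀ x, 0 ≤ q x) (hα : 0 ≤ α) (p : Ω × Finset Ω) :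
    0 ≤ thresholdScheme q α p := by
  unfold thresholdScheme
  split_ifs
  exacts [le_min (hq _) hα, le_max_right _ _, le_rfl]

lemma thresholdScheme_eq_add (x : Ω) (R : Finset Ω) :
    thresholdScheme q α (x, R) =
      (if R = {x} then min (q x) α else 0) + (if R = ∅ then max (q x - α) 0 else 0) := by
  by_cases hR : R = {x} <;> simp [thresholdScheme, hR]

variable [Fintype Ω]

lemma sum_ite_thresholdScheme (Q : Finset Ω → Prop) [DecidablePred Q] (x : Ω) :
    ∑ R, (if Q R then thresholdScheme q α (x, R) else 0) =
      (if Q {x} then min (q x) α else 0) + (if Q ∅ then max (q x - α) 0 else 0) := by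
  simp only [thresholdScheme_eq_add, ite_add_zero, sum_add_distrib]
  congr 1
  · exact (Fintype.sum_eq_single {x} fun R hR => by simp [hR]).trans (by simp)
  · exact (Fintype.sum_eq_single ∅ fun R hR => by simp [hR]).trans (by simp)

lemma marginalX_thresholdScheme : marginalX (thresholdScheme q α) = q := by
  funext x
  have h := sum_ite_thresholdScheme q α (fun _ => True) x
  simp only [if_true] at h
  rw [marginalX, h, min_add_max_sub_zero]

lemma sum_thresholdScheme : ∑ p, thresholdScheme q α p = ∑ x, q x := by
  rw [Fintype.sum_prod_type]
  exact sum_congr rfl fun x _ => congrFun (marginalX_thresholdScheme q α) x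

lemma sum_mem_thresholdScheme (y : Ω) :
    ∑ p : Ω × Finset Ω, (if y ∈ p.2 then thresholdScheme q α p else 0) = min (q y) α := by
  rw [Fintype.sum_prod_type]
  simp [sum_ite_thresholdScheme]

lemma typeII_thresholdScheme : typeII (thresholdScheme q α) = ∑ x, max (q x - α) 0 := by
  rw [typeII, Fintype.sum_prod_type]
  refine sum_congr rfl fun x _ => ?_
  rw [sum_ite_thresholdScheme (Q := fun R => x ∉ R)]
  simp

end thresholdScheme

theorem stmt_1_general {Ω : Type*} [Fintype Ω] [DecidableEq Ω]
    (ρ : Ω → ℝ)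
    (ε : ℝ) (α : ℝ) (hα : α ∈ Set.Icc (0 : ℝ) 1)
    (ρs : Ω → ℝ) (hρs0 : ∀ x, 0 ≤ ρs x) (hρs1 : ∑ x, ρs x = 1)
    (hρstv : tvDist ρs ρ ≤ ε)
    (hmin : ∀ ρ' : Ω → ℝ, (∀ x, 0 ≤ ρ' x) → (∑ x, ρ' x = 1) → tvDist ρ' ρ ≤ ε →
      ∑ x, max (ρs x - α) 0 ≤ ∑ x, max (ρ' x - α) 0)
    (P : Ω × Finset Ω → ℝ)
    (hPdef : P = fun p =>
      if p.2 = {p.1} then min (ρs p.1) α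
      else if p.2 = ∅ then max (ρs p.1 - α) 0
      else 0) :
    (∀ p, 0 ≤ P p) ∧ (∑ p, P p = 1) ∧
    tvDist (marginalX P) ρ ≤ ε ∧
    (∀ y : Ω, (∑ p : Ω × Finset Ω, if y ∈ p.2 then P p else 0) ≤ α) ∧
    typeII P = ∑ x, max (ρs x - α) 0 ∧
    (∑ x, max (ρs x - α) 0)
      = sInf {s : ℝ | ∃ ρ' : Ω → ℝ, (∀ x, 0 ≤ ρ' x) ∧ (∑ x, ρ' x = 1) ∧
          tvDist ρ' ρ ≤ ε ∧ s = ∑ x, max (ρ' x - α) 0} := by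
  obtain rfl : P = thresholdScheme ρs α := hPdef
  refine ⟨thresholdScheme_nonneg ρs α hρs0 hα.1, (sum_thresholdScheme ρs α).trans hρs1,
    (marginalX_thresholdScheme ρs α).symm ▸ hρstv,
    fun y => (sum_mem_thresholdScheme ρs α y).trans_le (min_le_right _ _),
    typeII_thresholdScheme ρs α, ?_⟩
  refine (IsLeast.csInf_eq ?_).symm
  refine ⟨⟨ρs, hρs0, hρs1, hρstv, rfl⟩, ?_⟩
  rintro _ ⟨ρ', h0, h1, htv, rfl⟩
  exact hmin ρ' h0 h1 htv

/-- The scheme `𝒫*` built from a minimizer `ρ*` is an `ε`-distorted watermarking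
scheme of `ρ`, with Type I error at most `α` and Type II error
`∑_x (ρ*(x) − α)₊ = min { ∑_x (ρ'(x) − α)₊ : TV(ρ', ρ) ≤ ε }`. -/
theorem stmt_1 {Ω : Type*} [Fintype Ω] [DecidableEq Ω] [Nonempty Ω]
    (ρ : Ω → ℝ) (hρ0 : ∀ x, 0 ≤ ρ x) (hρ1 : ∑ x, ρ x = 1)
    (ε : ℝ) (hε : 0 ≤ ε) (α : ℝ) (hα : α ∈ Set.Icc (0 : ℝ) 1)
    (ρs : Ω → ℝ) (hρs0 : ∀ x, 0 ≤ ρs x) (hρs1 : ∑ x, ρs x = 1)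
    (hρstv : tvDist ρs ρ ≤ ε)
    (hmin : ∀ ρ' : Ω → ℝ, (∀ x, 0 ≤ ρ' x) → (∑ x, ρ' x = 1) → tvDist ρ' ρ ≤ ε →
      ∑ x, max (ρs x - α) 0 ≤ ∑ x, max (ρ' x - α) 0)
    (P : Ω × Finset Ω → ℝ)
    (hPdef : P = fun p =>
      if p.2 = {p.1} then min (ρs p.1) α
      else if p.2 = ∅ then max (ρs p.1 - α) 0
      else 0) :
    (∀ p, 0 ≤ P p) ∧ (∑ p, P p = 1) ∧
    tvDist (marginalX P) ρ ≤ ε ∧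
    (∀ y : Ω, (∑ p : Ω × Finset Ω, if y ∈ p.2 then P p else 0) ≤ α) ∧
    typeII P = ∑ x, max (ρs x - α) 0 ∧
    (∑ x, max (ρs x - α) 0)
      = sInf {s : ℝ | ∃ ρ' : Ω → ℝ, (∀ x, 0 ≤ ρ' x) ∧ (∑ x, ρ' x = 1) ∧
          tvDist ρ' ρ ≤ ε ∧ s = ∑ x, max (ρ' x - α) 0} :=
  stmt_1_general ρ ε α hα ρs hρs0 hρs1 hρstv hmin P hPdef
end
end

section
/- Let Ω be a finite nonempty set, ρ a probability distribution on Ω, ε ≥ 0 and α ∈ (0,1]. If α·|Ω| ≥ 1, then min{ Σ_{x∈Ω}(ρ'(x) − α)_+ : ρ' a probability distribution on Ω with TV(ρ', ρ) ≤ ε } = ( Σ_{x∈Ω}(ρ(x) − α)_+ − ε )_+. -/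
open Finset

noncomputable section

/-! Since `(a)₊ - (b)₊ ≤ (a - b)₊` and `∑ (ρ - ρ')₊ = TV(ρ', ρ)` for distributions, the excess
`∑ (ρ - α)₊` drops by at most the distance moved, which gives the lower bound. For the upper
bound, `α · |Ω| ≥ 1` leaves room for a distribution `σ` with `min ρ α ≤ σ ≤ α`; such a `σ` has
no excess and lies within distance `∑ (ρ - α)₊` of `ρ`, and moving a fraction `t` of the way
from `ρ` to `σ` costs `t · TV(σ, ρ)` while scaling the excess by at most `1 - t`. -/

section

variable {Ω : Type*} [Fintype Ω]

lemma two_mul_max_zero (a : ℝ) : 2 * max a 0 = a + |a| := by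
  rcases le_total 0 a with h | h
  · rw [max_eq_left h, abs_of_nonneg h]; ring
  · rw [max_eq_right h, abs_of_nonpos h]; ring

lemma sum_max_sub_zero_eq_tvDist {σ ρ : Ω → ℝ} (hsum : ∑ x, σ x = ∑ x, ρ x) :
    ∑ x, max (ρ x - σ x) 0 = tvDist σ ρ := by
  have hdiff : ∑ x, (ρ x - σ x) = 0 := by rw [sum_sub_distrib, hsum, sub_self]
  have htwice : 2 * ∑ x, max (ρ x - σ x) 0 = ∑ x, |σ x - ρ x| := by
    simp only [mul_sum, two_mul_max_zero, sum_add_distrib, hdiff, zero_add, abs_sub_comm]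
  rw [tvDist, ← htwice]
  ring

lemma sum_max_sub_le_add_tvDist {σ ρ : Ω → ℝ} (hsum : ∑ x, σ x = ∑ x, ρ x) (α : ℝ) :
    ∑ x, max (ρ x - α) 0 ≤ ∑ x, max (σ x - α) 0 + tvDist σ ρ := by
  rw [← sum_max_sub_zero_eq_tvDist hsum, ← sum_add_distrib]
  refine sum_le_sum fun x _ => ?_
  have h := max_sub_max_le_max (ρ x - α) 0 (σ x - α) 0
  rw [sub_sub_sub_cancel_right, sub_self] at h
  linarith

lemma tvDist_le_sum_max_sub {σ ρ : Ω → ℝ} (hsum : ∑ x, σ x = ∑ x, ρ x) {α : ℝ}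
    (hσ : ∀ x, min (ρ x) α ≤ σ x) :
    tvDist σ ρ ≤ ∑ x, max (ρ x - α) 0 := by
  rw [← sum_max_sub_zero_eq_tvDist hsum]
  refine sum_le_sum fun x _ => max_le ?_ (le_max_right _ _)
  rcases min_le_iff.mp (hσ x) with h | h
  · linarith [le_max_right (ρ x - α) 0]
  · linarith [le_max_left (ρ x - α) 0]

lemma tvDist_add_smul_sub (ρ σ : Ω → ℝ) {t : ℝ} (ht : 0 ≤ t) :
    tvDist (fun x => ρ x + t * (σ x - ρ x)) ρ = t * tvDist σ ρ := by
  simp only [tvDist, add_sub_cancel_left, abs_mul, abs_of_nonneg ht, ← mul_sum]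
  ring

lemma sum_max_add_smul_sub_le {ρ σ : Ω → ℝ} {α t : ℝ} (hσ : ∀ x, σ x ≤ α) (ht0 : 0 ≤ t)
    (ht1 : t ≤ 1) :
    ∑ x, max (ρ x + t * (σ x - ρ x) - α) 0 ≤ (1 - t) * ∑ x, max (ρ x - α) 0 := by
  rw [mul_sum]
  refine sum_le_sum fun x _ => ?_
  rw [mul_max_of_nonneg _ _ (sub_nonneg.mpr ht1), mul_zero]
  have hsplit : ρ x + t * (σ x - ρ x) - α = (1 - t) * (ρ x - α) + t * (σ x - α) := by ring
  exact max_le_max_right 0 (by nlinarith [hσ x])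

lemma exists_min_le_le_of_one_le_mul_card {ρ : Ω → ℝ} (hρ1 : ∑ x, ρ x = 1) {α : ℝ}
    (hcard : 1 ≤ α * Fintype.card Ω) :
    ∃ σ : Ω → ℝ, (∀ x, min (ρ x) α ≤ σ x) ∧ (∀ x, σ x ≤ α) ∧ ∑ x, σ x = 1 := by
  set m := ∑ x, min (ρ x) α
  have hm : m ≤ 1 := hρ1 ▸ sum_le_sum fun x _ => min_le_left _ _
  set c := (1 - m) / (α * Fintype.card Ω - m)
  have hc0 : 0 ≤ c := div_nonneg (by linarith) (by linarith)
  have hc1 : c ≤ 1 := div_le_one_of_le₀ (by linarith) (by linarith)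
  have hcm : c * (α * Fintype.card Ω - m) = 1 - m :=
    div_mul_cancel_of_imp fun h => by linarith
  refine ⟨fun x => min (ρ x) α + c * (α - min (ρ x) α), fun x => ?_, fun x => ?_, ?_⟩
  · nlinarith [min_le_right (ρ x) α]
  · nlinarith [min_le_right (ρ x) α]
  · simp only [sum_add_distrib, ← mul_sum, sum_sub_distrib, sum_const, card_univ,
      nsmul_eq_mul]
    linarith [mul_comm α (Fintype.card Ω : ℝ)]

lemma exists_tvDist_le_sum_max_sub_le {ρ σ : Ω → ℝ} (hρ0 : ∀ x, 0 ≤ ρ x)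
    (hσ0 : ∀ x, 0 ≤ σ x) (hsum : ∑ x, σ x = ∑ x, ρ x) {α : ℝ} (hσα : ∀ x, σ x ≤ α)
    (hσρ : tvDist σ ρ ≤ ∑ x, max (ρ x - α) 0) {ε : ℝ} (hε : 0 ≤ ε) :
    ∃ ρ' : Ω → ℝ, (∀ x, 0 ≤ ρ' x) ∧ ∑ x, ρ' x = ∑ x, ρ x ∧ tvDist ρ' ρ ≤ ε ∧
      ∑ x, max (ρ' x - α) 0 ≤ max (∑ x, max (ρ x - α) 0 - ε) 0 := by
  set S := ∑ x, max (ρ x - α) 0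
  by_cases hSε : S ≤ ε
  · refine ⟨σ, hσ0, hsum, hσρ.trans hSε, le_of_eq_of_le ?_ (le_max_right _ _)⟩
    exact sum_eq_zero fun x _ => max_eq_right (sub_nonpos.mpr (hσα x))
  set t := ε / S
  have hS : 0 < S := by linarith
  have ht0 : 0 ≤ t := div_nonneg hε hS.le
  have ht1 : t ≤ 1 := div_le_one_of_le₀ (by linarith) hS.le
  have htS : t * S = ε := div_mul_cancel₀ ε hS.ne'
  refine ⟨fun x => ρ x + t * (σ x - ρ x), fun x => by nlinarith [hρ0 x, hσ0 x], ?_, ?_, ?_⟩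
  · simp only [sum_add_distrib, ← mul_sum, sum_sub_distrib, hsum, sub_self, mul_zero, add_zero]
  · rw [tvDist_add_smul_sub ρ σ ht0, ← htS]
    exact mul_le_mul_of_nonneg_left hσρ ht0
  · refine (sum_max_add_smul_sub_le hσα ht0 ht1).trans (le_of_eq_of_le ?_ (le_max_left _ _))
    linarith

end

theorem stmt_2_general {Ω : Type*} [Fintype Ω]
    (ρ : Ω → ℝ) (hρ0 : ∀ x, 0 ≤ ρ x) (hρ1 : ∑ x, ρ x = 1)
    (ε : ℝ) (hε : 0 ≤ ε) (α : ℝ) (hα : α ∈ Set.Ioc (0 : ℝ) 1)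
    (hcard : 1 ≤ α * Fintype.card Ω) :
    sInf {s : ℝ | ∃ ρ' : Ω → ℝ, (∀ x, 0 ≤ ρ' x) ∧ (∑ x, ρ' x = 1) ∧
        tvDist ρ' ρ ≤ ε ∧ s = ∑ x, max (ρ' x - α) 0}
      = max ((∑ x, max (ρ x - α) 0) - ε) 0 := by
  set S := ∑ x, max (ρ x - α) 0
  have hlower : ∀ τ : Ω → ℝ, ∑ x, τ x = 1 → tvDist τ ρ ≤ ε →
      max (S - ε) 0 ≤ ∑ x, max (τ x - α) 0 := fun τ hτ1 hτρ =>
    max_le (by linarith [sum_max_sub_le_add_tvDist (hτ1.trans hρ1.symm) α])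
      (sum_nonneg fun x _ => le_max_right _ _)
  obtain ⟨σ, hσmin, hσα, hσ1⟩ := exists_min_le_le_of_one_le_mul_card hρ1 hcard
  have hσ0 : ∀ x, 0 ≤ σ x := fun x => (le_min (hρ0 x) hα.1.le).trans (hσmin x)
  have hsum : ∑ x, σ x = ∑ x, ρ x := hσ1.trans hρ1.symm
  obtain ⟨ρ', hρ'0, hρ'1, hρ'ρ, hρ'S⟩ := exists_tvDist_le_sum_max_sub_le hρ0 hσ0 hsum hσα
    (tvDist_le_sum_max_sub hsum hσmin) hε
  refine IsLeast.csInf_eq ⟨⟨ρ', hρ'0, hρ'1.trans hρ1, hρ'ρ, ?_⟩, ?_⟩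
  · exact (hρ'S.antisymm (hlower ρ' (hρ'1.trans hρ1) hρ'ρ)).symm
  · rintro _ ⟨τ, -, hτ1, hτρ, rfl⟩
    exact hlower τ hτ1 hτρ

/-- If `α · |Ω| ≥ 1`, then
`min { ∑_x (ρ'(x) − α)₊ : ρ' a probability distribution with TV(ρ', ρ) ≤ ε }
  = ( ∑_x (ρ(x) − α)₊ − ε )₊`. -/
theorem stmt_2 {Ω : Type*} [Fintype Ω] [Nonempty Ω]
    (ρ : Ω → ℝ) (hρ0 : ∀ x, 0 ≤ ρ x) (hρ1 : ∑ x, ρ x = 1)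
    (ε : ℝ) (hε : 0 ≤ ε) (α : ℝ) (hα : α ∈ Set.Ioc (0 : ℝ) 1)
    (hcard : 1 ≤ α * Fintype.card Ω) :
    sInf {s : ℝ | ∃ ρ' : Ω → ℝ, (∀ x, 0 ≤ ρ' x) ∧ (∑ x, ρ' x = 1) ∧
        tvDist ρ' ρ ≤ ε ∧ s = ∑ x, max (ρ' x - α) 0}
      = max ((∑ x, max (ρ x - α) 0) - ε) 0 :=
  stmt_2_general ρ hρ0 hρ1 ε hε α hα hcard
end
end

section
/- Let Ω be a finite nonempty set, ρ a probability distribution on Ω, and α ∈ [0,1]. The minimum of the Type II error β(𝒫) over all distortion-free (0-distorted) watermarking schemes 𝒫 of ρ with Type I error α(𝒫) ≤ α equals Σ_{x∈Ω}(ρ(x) − α)_+, and this minimum is attained by some distortion-free watermarking scheme of ρ with Type I error at most α. -/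
open Finset

noncomputable section

/-- The minimum Type II error over all distortion-free watermarking schemes of `ρ`
with Type I error at most `α` equals `∑_x (ρ(x) − α)₊`, and it is attained. -/
theorem stmt_3 {Ω : Type*} [Fintype Ω] [DecidableEq Ω] [Nonempty Ω]
    (ρ : Ω → ℝ) (hρ0 : ∀ x, 0 ≤ ρ x) (hρ1 : ∑ x, ρ x = 1)
    (α : ℝ) (hα : α ∈ Set.Icc (0 : ℝ) 1) :
    IsLeast
      {b : ℝ | ∃ P : Ω × Finset Ω → ℝ,
        (∀ p, 0 ≤ P p) ∧ (∑ p, P p = 1) ∧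
        marginalX P = ρ ∧
        (∀ y : Ω, (∑ p : Ω × Finset Ω, if y ∈ p.2 then P p else 0) ≤ α) ∧
        b = typeII P}
      (∑ x, max (ρ x - α) 0) := by
  obtain ⟨hα0, hα1⟩ := hα
  constructor
  · -- membership: explicit optimal scheme
    refine ⟨fun p => (if p.2 = {p.1} then min (ρ p.1) α else 0) +
      (if p.2 = (∅ : Finset Ω) then ρ p.1 - min (ρ p.1) α else 0), ?_, ?_, ?_, ?_, ?_⟩
    · intro p
      have h1 : (0:ℝ) ≤ min (ρ p.1) α := le_min (hρ0 p.1) hα0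
      have h2 : (0:ℝ) ≤ ρ p.1 - min (ρ p.1) α := sub_nonneg.2 (min_le_left _ _)
      positivity
    · rw [Fintype.sum_prod_type]
      rw [← hρ1]
      refine Finset.sum_congr rfl fun x _ => ?_
      rw [Finset.sum_add_distrib, Finset.sum_ite_eq' Finset.univ ({x} : Finset Ω),
        Finset.sum_ite_eq' Finset.univ (∅ : Finset Ω)]
      simp
    · funext x
      unfold marginalX
      rw [Finset.sum_add_distrib, Finset.sum_ite_eq' Finset.univ ({x} : Finset Ω),
        Finset.sum_ite_eq' Finset.univ (∅ : Finset Ω)]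
      simp
    · intro y
      rw [Fintype.sum_prod_type]
      have : ∀ x : Ω, (∑ R : Finset Ω, if y ∈ R then
          ((if R = {x} then min (ρ x) α else 0) +
            (if R = (∅ : Finset Ω) then ρ x - min (ρ x) α else 0)) else 0)
          = if y = x then min (ρ x) α else 0 := by
        intro x
        rw [Finset.sum_congr rfl (g := fun R =>
            if R = {x} then (if y ∈ ({x}:Finset Ω) then min (ρ x) α else 0) else 0)]
        · rw [Finset.sum_ite_eq' Finset.univ ({x} : Finset Ω)]
          simp
        · intro R _
          by_cases h1 : R = {x}
          · have h2 : R ≠ (∅ : Finset Ω) := by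
              rw [h1]; exact Finset.singleton_ne_empty x
            simp [h1, h2, Finset.mem_singleton]
          · by_cases h2 : R = (∅ : Finset Ω) <;>
              simp [h1, h2, (Finset.singleton_ne_empty x).symm]
      rw [Finset.sum_congr rfl fun x _ => this x]
      rw [Finset.sum_ite_eq Finset.univ y]
      simp only [Finset.mem_univ, if_true]
      exact min_le_right _ _
    · unfold typeII
      rw [Fintype.sum_prod_type]
      refine (Finset.sum_congr rfl fun x _ => ?_).symm
      have : ∀ R : Finset Ω, (if x ∉ R then
          ((if R = {x} then min (ρ x) α else 0) +
            (if R = (∅ : Finset Ω) then ρ x - min (ρ x) α else 0)) else 0)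
          = if R = (∅ : Finset Ω) then ρ x - min (ρ x) α else 0 := by
        intro R
        by_cases h1 : R = {x}
        · have h2 : R ≠ (∅ : Finset Ω) := by
            rw [h1]; exact Finset.singleton_ne_empty x
          simp [h1, h2]
        · by_cases h2 : R = (∅ : Finset Ω)
          · simp [h1, h2, (Finset.singleton_ne_empty x).symm]
          · by_cases h3 : x ∈ R <;> simp [h1, h2, h3]
      rw [Finset.sum_congr rfl fun R _ => this R,
        Finset.sum_ite_eq' Finset.univ (∅ : Finset Ω)]
      have : ρ x - min (ρ x) α = max (ρ x - α) 0 := by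
        rcases le_total (ρ x) α with h | h
        · rw [min_eq_left h, max_eq_right (by linarith)]; ring
        · rw [min_eq_right h, max_eq_left (by linarith)]
      simp [this]
  · -- lower bound
    rintro b ⟨P, hP0, hP1, hPm, hPα, rfl⟩
    unfold typeII
    rw [Fintype.sum_prod_type]
    refine Finset.sum_le_sum fun x _ => ?_
    refine max_le ?_ (Finset.sum_nonneg fun R _ => by split; exacts [hP0 _, le_rfl])
    have hsplit : ρ x = (∑ R : Finset Ω, if x ∉ R then P (x, R) else 0) +
        (∑ R : Finset Ω, if x ∈ R then P (x, R) else 0) := by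
      have := congrFun hPm x
      unfold marginalX at this
      rw [← this, ← Finset.sum_add_distrib]
      refine Finset.sum_congr rfl fun R _ => ?_
      by_cases h : x ∈ R <;> simp [h]
    have hin : (∑ R : Finset Ω, if x ∈ R then P (x, R) else 0) ≤ α := by
      refine le_trans ?_ (hPα x)
      rw [Fintype.sum_prod_type]
      refine Finset.single_le_sum (f := fun x' => ∑ R : Finset Ω,
        if x ∈ R then P (x', R) else 0) (fun x' _ =>
        Finset.sum_nonneg fun R _ => by split; exacts [hP0 _, le_rfl]) (Finset.mem_univ x)
    linarith
end
end

section
/- Let Ω be a finite set with |Ω| = n, and let α ∈ (0,1) be such that α·n and 1/α are positive integers. Every model-agnostic watermarking scheme (η, {𝒫_ρ}) of level α on Ω has maximum Type II error loss γ(η) = max_ρ ( β(𝒫_ρ) − Σ_{x∈Ω}(ρ(x) − α)_+ ) at least C(n − 1/α, αn)/C(n, αn), where C(·,·) denotes the binomial coefficient. -/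
/-! Probe the scheme with the distributions `ρ_S` that put mass `α` on each point of an
`m`-set `S` (`m = 1/α`). Their optimal Type II error is `0`, while `X ∈ S` almost surely, so the
loss at `ρ_S` is at least `η(R ∩ S = ∅)`. All these schemes share the law `η` of `R`, and the level
constraint gives `E_η |R| ≤ αn = a`. Averaging over `S`, `η(R ∩ S = ∅)` has mean
`E_η C(n - |R|, m) / C(n, m)`, and since `r ↦ C(n - r, m)` is convex (its tangent at `r = a` lies
below it), this is at least `C(n - a, m) / C(n, m) = C(n - m, a) / C(n, a)`. -/

open Finset

noncomputable section

/-- The marginal distribution of the rejection region `R` under a joint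
distribution `P` on `Ω × 2^Ω`. -/
def marginalR {Ω : Type*} [Fintype Ω] [DecidableEq Ω]
    (P : Ω × Finset Ω → ℝ) (R : Finset Ω) : ℝ :=
  ∑ x, P (x, R)

namespace Nat

theorem choose_mul_choose_sub_comm (n a m : ℕ) :
    n.choose m * (n - m).choose a = n.choose a * (n - a).choose m := by
  have h₁ := choose_mul (n := n) (k := m + a) (s := m) (le_add_right m a)
  have h₂ := choose_mul (n := n) (k := a + m) (s := a) (le_add_right a m)
  rw [Nat.add_sub_cancel_left] at h₁ h₂
  rw [← h₁, ← h₂, Nat.add_comm a m, choose_symm_add]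

theorem choose_succ_le_choose_sub_add_mul (c k d : ℕ) :
    c.choose (k + 1) ≤ (c - d).choose (k + 1) + d * (c - 1).choose k := by
  induction d with
  | zero => simp
  | succ d ih =>
    have step : (c - d).choose (k + 1) ≤ (c - (d + 1)).choose (k + 1) + (c - 1).choose k := by
      rcases Nat.lt_or_ge d c with h | h
      · rw [show c - d = c - (d + 1) + 1 by omega, choose_succ_succ', Nat.add_comm]
        gcongr
        omega
      · simp [Nat.sub_eq_zero_of_le h]
    rw [Nat.succ_mul]
    omega

theorem choose_succ_add_mul_le_choose_add (c k d : ℕ) :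
    c.choose (k + 1) + d * (c - 1).choose k ≤ (c + d).choose (k + 1) := by
  induction d with
  | zero => simp
  | succ d ih =>
    have step : (c + d).choose (k + 1) + (c - 1).choose k ≤ (c + (d + 1)).choose (k + 1) := by
      rw [← Nat.add_assoc, choose_succ_succ', Nat.add_comm]
      gcongr
      omega
    rw [Nat.succ_mul]
    omega

theorem cast_choose_sub_div_choose_comm {n a m : ℕ} (ha : a ≤ n) (hm : m ≤ n) :
    ((n - m).choose a : ℝ) / n.choose a = ((n - a).choose m : ℝ) / n.choose m := by
  have hpos {k : ℕ} (hk : k ≤ n) : (n.choose k : ℝ) ≠ 0 := by exact_mod_cast (choose_pos hk).ne'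
  rw [div_eq_div_iff (hpos ha) (hpos hm)]
  exact_mod_cast by rw [Nat.mul_comm, choose_mul_choose_sub_comm, Nat.mul_comm]

end Nat

theorem choose_sub_tangent_le {N a : ℕ} (k r : ℕ) (ha : a ≤ N) :
    ((N - a).choose (k + 1) : ℝ) - (N - a - 1).choose k * ((r : ℝ) - a) ≤
      (N - r).choose (k + 1) := by
  rcases le_total a r with h | h
  · obtain ⟨d, rfl⟩ := Nat.exists_eq_add_of_le h
    have := (Nat.cast_le (α := ℝ)).2 (Nat.choose_succ_le_choose_sub_add_mul (N - a) k d)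
    push_cast [Nat.sub_sub] at this ⊢
    linarith
  · obtain ⟨d, rfl⟩ := Nat.exists_eq_add_of_le h
    have := (Nat.cast_le (α := ℝ)).2 (Nat.choose_succ_add_mul_le_choose_add (N - (r + d)) k d)
    rw [show N - (r + d) + d = N - r by omega] at this
    push_cast [Nat.sub_sub] at this ⊢
    linarith

theorem choose_sub_le_sum_mul_choose_sub {ι : Type*} {s : Finset ι} {w : ι → ℝ} {r : ι → ℕ}
    {N a m : ℕ} (hw₀ : ∀ i ∈ s, 0 ≤ w i) (hw₁ : ∑ i ∈ s, w i = 1)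
    (hr : ∑ i ∈ s, w i * r i ≤ a) (ha : a ≤ N) (hm : 0 < m) :
    ((N - a).choose m : ℝ) ≤ ∑ i ∈ s, w i * (N - r i).choose m := by
  obtain ⟨k, rfl⟩ : ∃ k, m = k + 1 := ⟨m - 1, by omega⟩
  set C : ℝ := ((N - a).choose (k + 1) : ℝ)
  set c : ℝ := ((N - a - 1).choose k : ℝ)
  calc C ≤ C + c * (a - ∑ i ∈ s, w i * r i) :=
        le_add_of_nonneg_right (mul_nonneg (Nat.cast_nonneg _) (sub_nonneg.2 hr))
    _ = (C + c * a) * ∑ i ∈ s, w i - c * ∑ i ∈ s, w i * r i := by rw [hw₁]; ring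
    _ = ∑ i ∈ s, w i * (C - c * (r i - a)) := by
      rw [mul_sum, mul_sum, ← sum_sub_distrib]
      exact sum_congr rfl fun i _ => by ring
    _ ≤ ∑ i ∈ s, w i * (N - r i).choose (k + 1) :=
      sum_le_sum fun i hi => mul_le_mul_of_nonneg_left (choose_sub_tangent_le k (r i) ha) (hw₀ i hi)

section Avoidance

variable {α : Type*} [Fintype α] [DecidableEq α]

theorem card_filter_disjoint_powersetCard (R : Finset α) (m : ℕ) :
    #{S ∈ (univ : Finset α).powersetCard m | Disjoint R S} = (Fintype.card α - #R).choose m := by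
  have : {S ∈ (univ : Finset α).powersetCard m | Disjoint R S} = Rᶜ.powersetCard m := by
    ext S
    simp [mem_powersetCard, subset_compl_iff_disjoint_left, and_comm]
  rw [this, card_powersetCard, card_compl]

theorem sum_powersetCard_sum_disjoint (η : Finset α → ℝ) (m : ℕ) :
    ∑ S ∈ univ.powersetCard m, ∑ R with Disjoint R S, η R =
      ∑ R, η R * (Fintype.card α - #R).choose m := by
  simp_rw [sum_filter]
  rw [sum_comm]
  refine sum_congr rfl fun R _ => ?_
  rw [← sum_filter, sum_const, card_filter_disjoint_powersetCard, nsmul_eq_mul, mul_comm]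

theorem exists_card_eq_choose_div_le_sum_disjoint {η : Finset α → ℝ} {a m : ℕ}
    (hη₀ : ∀ R, 0 ≤ η R) (hη₁ : ∑ R, η R = 1) (hmean : ∑ R, η R * #R ≤ a)
    (ha : a ≤ Fintype.card α) (hm₀ : 0 < m) (hm : m ≤ Fintype.card α) :
    ∃ S : Finset α, #S = m ∧
      ((Fintype.card α - a).choose m : ℝ) / (Fintype.card α).choose m ≤
        ∑ R with Disjoint R S, η R := by
  have hpos : (0 : ℝ) < (Fintype.card α).choose m := by exact_mod_cast Nat.choose_pos hm
  have hsum : ∑ _S ∈ (univ : Finset α).powersetCard m,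
      ((Fintype.card α - a).choose m : ℝ) / (Fintype.card α).choose m ≤
        ∑ S ∈ univ.powersetCard m, ∑ R with Disjoint R S, η R := by
    rw [sum_const, card_powersetCard, card_univ, nsmul_eq_mul, mul_div_cancel₀ _ hpos.ne',
      sum_powersetCard_sum_disjoint]
    exact choose_sub_le_sum_mul_choose_sub (fun R _ => hη₀ R) hη₁ hmean ha hm₀
  obtain ⟨S, hS, hle⟩ := exists_le_of_sum_le (powersetCard_nonempty.2 (by rwa [card_univ])) hsum
  exact ⟨S, (mem_powersetCard.1 hS).2, hle⟩

end Avoidance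

section Watermark

variable {Ω : Type*} [Fintype Ω] [DecidableEq Ω] {P : Ω × Finset Ω → ℝ}

theorem sum_marginalR : ∑ R, marginalR P R = ∑ p, P p := by
  rw [Fintype.sum_prod_type, sum_comm]
  rfl

theorem sum_marginalR_mul_card_le {α : ℝ}
    (hP : ∀ y : Ω, (∑ p : Ω × Finset Ω, if y ∈ p.2 then P p else 0) ≤ α) :
    ∑ R, marginalR P R * #R ≤ Fintype.card Ω * α := by
  calc ∑ R, marginalR P R * #R
      = ∑ y : Ω, ∑ p : Ω × Finset Ω, if y ∈ p.2 then P p else 0 := by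
        rw [sum_comm, Fintype.sum_prod_type, sum_comm]
        simp [marginalR, mul_sum, mul_comm]
    _ ≤ ∑ _y : Ω, α := sum_le_sum fun y _ => hP y
    _ = Fintype.card Ω * α := by rw [sum_const, card_univ, nsmul_eq_mul]

theorem typeII_le_sum (hP : ∀ p, 0 ≤ P p) : typeII P ≤ ∑ p, P p :=
  sum_le_sum fun p _ => by split_ifs <;> simp [hP p]

theorem sum_disjoint_marginalR_le_typeII {S : Finset Ω} (hP : ∀ p, 0 ≤ P p)
    (hS : ∀ x ∉ S, marginalX P x = 0) :
    ∑ R with Disjoint R S, marginalR P R ≤ typeII P := by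
  have hzero : ∀ x ∉ S, ∀ R, P (x, R) = 0 := fun x hx R =>
    (sum_eq_zero_iff_of_nonneg fun R _ => hP (x, R)).1 (hS x hx) R (mem_univ R)
  have hdisj : ∀ R, Disjoint R S → marginalR P R = ∑ x, if x ∉ R then P (x, R) else 0 :=
    fun R hRS => sum_congr rfl fun x _ => by
      split_ifs with hx
      · exact hzero x (disjoint_left.1 hRS hx) R
      · rfl
  calc ∑ R with Disjoint R S, marginalR P R
      = ∑ R with Disjoint R S, ∑ x, if x ∉ R then P (x, R) else 0 := sum_congr rfl fun R hR =>
        hdisj R (mem_filter.1 hR).2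
    _ ≤ ∑ R, ∑ x, if x ∉ R then P (x, R) else 0 :=
        sum_le_sum_of_subset_of_nonneg (filter_subset _ _) fun R _ _ =>
          sum_nonneg fun x _ => by split_ifs <;> simp [hP]
    _ = typeII P := by rw [typeII, Fintype.sum_prod_type, sum_comm]

end Watermark

theorem stmt_6_general {Ω : Type*} [Fintype Ω] [DecidableEq Ω]
    (α : ℝ) (hα : α ∈ Set.Ioo (0 : ℝ) 1)
    (a m : ℕ) (ha0 : 0 < a) (hm0 : 0 < m)
    (ha : (a : ℝ) = α * Fintype.card Ω) (hm : (m : ℝ) = 1 / α)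
    (η : Finset Ω → ℝ)
    (Pfam : (Ω → ℝ) → Ω × Finset Ω → ℝ)
    (hscheme : ∀ ρ : Ω → ℝ, (∀ x, 0 ≤ ρ x) → (∑ x, ρ x = 1) →
      (∀ p, 0 ≤ Pfam ρ p) ∧ (∑ p, Pfam ρ p = 1) ∧
      marginalX (Pfam ρ) = ρ ∧ marginalR (Pfam ρ) = η ∧
      (∀ y : Ω, (∑ p : Ω × Finset Ω, if y ∈ p.2 then Pfam ρ p else 0) ≤ α)) :
    ((Fintype.card Ω - m).choose a : ℝ) / ((Fintype.card Ω).choose a : ℝ) ≤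
      sSup {t : ℝ | ∃ ρ : Ω → ℝ, (∀ x, 0 ≤ ρ x) ∧ (∑ x, ρ x = 1) ∧
        t = typeII (Pfam ρ) - ∑ x, max (ρ x - α) 0} := by
  obtain ⟨hα0, hα1⟩ := hα
  set n := Fintype.card Ω
  have hαm : α * m = 1 := by rw [hm]; field_simp
  have hmn : m ≤ n := by
    have : (a * m : ℝ) = n := by rw [ha, mul_right_comm, hαm, one_mul]
    exact (Nat.le_mul_of_pos_left m ha0).trans_eq (by exact_mod_cast this)
  have han : a ≤ n := by exact_mod_cast ha ▸ mul_le_of_le_one_left n.cast_nonneg hα1.le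
  set ρ : Finset Ω → Ω → ℝ := fun S x => if x ∈ S then α else 0
  have hρ : ∀ S : Finset Ω, #S = m → (∀ x, 0 ≤ ρ S x) ∧ ∑ x, ρ S x = 1 := fun S hS =>
    ⟨fun x => by positivity, by simp [ρ, hS, mul_comm, hαm]⟩
  -- `η` is the law of `R` under every `Pfam ρ`, so any admissible `ρ` exhibits its properties.
  obtain ⟨S₀, -, hS₀⟩ := exists_subset_card_eq (hmn.trans_eq card_univ.symm)
  obtain ⟨hP₀, hP₁, -, hPη, hPα⟩ := hscheme (ρ S₀) (hρ S₀ hS₀).1 (hρ S₀ hS₀).2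
  obtain ⟨S, hS, hηS⟩ := exists_card_eq_choose_div_le_sum_disjoint
    (fun R => hPη ▸ sum_nonneg fun x _ => hP₀ (x, R)) (hPη ▸ sum_marginalR.trans hP₁)
    (by rw [← hPη]; exact (sum_marginalR_mul_card_le hPα).trans (by rw [ha, mul_comm])) han hm0 hmn
  obtain ⟨hQ₀, -, hQX, hQη, -⟩ := hscheme (ρ S) (hρ S hS).1 (hρ S hS).2
  have hbdd : BddAbove {t : ℝ | ∃ ρ : Ω → ℝ, (∀ x, 0 ≤ ρ x) ∧ (∑ x, ρ x = 1) ∧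
      t = typeII (Pfam ρ) - ∑ x, max (ρ x - α) 0} := by
    refine ⟨1, ?_⟩
    rintro t ⟨ρ', h₀, h₁, rfl⟩
    obtain ⟨hP₀', hP₁', -⟩ := hscheme ρ' h₀ h₁
    linarith [typeII_le_sum hP₀', sum_nonneg fun x (_ : x ∈ univ) => le_max_right (ρ' x - α) 0]
  refine le_csSup hbdd ⟨ρ S, (hρ S hS).1, (hρ S hS).2, rfl⟩ |>.trans' ?_
  have hexcess : ∑ x, max (ρ S x - α) 0 = 0 :=
    sum_eq_zero fun x _ => max_eq_right (by simp only [ρ]; split_ifs <;> linarith)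
  rw [hexcess, sub_zero, Nat.cast_choose_sub_div_choose_comm han hmn]
  exact hηS.trans (hQη ▸ sum_disjoint_marginalR_le_typeII hQ₀ fun x hx => by simp [hQX, ρ, hx])

/-- Every model-agnostic watermarking scheme `(η, {Pfam_ρ})` of level `α` on `Ω`
(`|Ω| = n`, `αn` and `1/α` positive integers) has maximum Type II error loss
`γ(η) = sup_ρ (β(Pfam_ρ) − ∑_x (ρ(x) − α)₊)` at least
`C(n − 1/α, αn) / C(n, αn)`. -/
theorem stmt_6 {Ω : Type*} [Fintype Ω] [DecidableEq Ω] [Nonempty Ω]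
    (α : ℝ) (hα : α ∈ Set.Ioo (0 : ℝ) 1)
    (a m : ℕ) (ha0 : 0 < a) (hm0 : 0 < m)
    (ha : (a : ℝ) = α * Fintype.card Ω) (hm : (m : ℝ) = 1 / α)
    (η : Finset Ω → ℝ)
    (Pfam : (Ω → ℝ) → Ω × Finset Ω → ℝ)
    (hscheme : ∀ ρ : Ω → ℝ, (∀ x, 0 ≤ ρ x) → (∑ x, ρ x = 1) →
      (∀ p, 0 ≤ Pfam ρ p) ∧ (∑ p, Pfam ρ p = 1) ∧
      marginalX (Pfam ρ) = ρ ∧ marginalR (Pfam ρ) = η ∧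
      (∀ y : Ω, (∑ p : Ω × Finset Ω, if y ∈ p.2 then Pfam ρ p else 0) ≤ α)) :
    ((Fintype.card Ω - m).choose a : ℝ) / ((Fintype.card Ω).choose a : ℝ) ≤
      sSup {t : ℝ | ∃ ρ : Ω → ℝ, (∀ x, 0 ≤ ρ x) ∧ (∑ x, ρ x = 1) ∧
        t = typeII (Pfam ρ) - ∑ x, max (ρ x - α) 0} :=
  stmt_6_general α hα a m ha0 hm0 ha hm η Pfam hscheme
end
end

section
/- Let n be a positive integer and α ∈ (0,1) with αn ∈ ℤ and m := 1/α ∈ ℤ. Then for every integer k with 0 ≤ k ≤ n, min(αk, 1) − 1 + C(n − αn, k)/C(n, k) ≤ C(n − αn, m)/C(n, m), where C(a,b) denotes the binomial coefficient with the convention C(a,b) = 0 when b > a. -/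
/-!
Write `r k = C(n - a, k) / C(n, k)`. By the identity `C(n - a, k) C(n, a) = C(n - k, a) C(n, k)`,
`r k = C(n - k, a) / C(n, a)`, which is antitone in `k`, and by Pascal's rule each step
`r k - r (k + 1) = C(n - k - 1, a - 1) / C(n, a)` is at most `C(n - 1, a - 1) / C(n, a) = a / n = α`.
For `k ≥ m` the claim is `r k ≤ r m`; for `k < m` it is `r k - r m ≤ (m - k) α = 1 - α k`.
-/

namespace Nat

theorem choose_sub_mul_choose (n a k : ℕ) :
    (n - a).choose k * n.choose a = (n - k).choose a * n.choose k := by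
  have h₁ := choose_mul (n := n) (k := a + k) (le_add_right a k)
  have h₂ := choose_mul (n := n) (k := a + k) (le_add_left k a)
  rw [add_tsub_cancel_left, choose_symm_add] at h₁
  rw [add_tsub_cancel_right] at h₂
  rw [mul_comm, ← h₁, h₂, mul_comm]

theorem choose_sub_le_choose_sub_succ_add (n a j : ℕ) :
    (n - j).choose (a + 1) ≤ (n - (j + 1)).choose (a + 1) + (n - 1).choose a := by
  rcases lt_or_ge j n with hjn | hnj
  · have hpascal := choose_succ_succ' (n - (j + 1)) a
    rw [show n - (j + 1) + 1 = n - j by omega] at hpascal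
    rw [hpascal, add_comm]
    exact Nat.add_le_add_left (choose_le_choose a (show n - (j + 1) ≤ n - 1 by omega)) _
  · simp [Nat.sub_eq_zero_of_le hnj]

theorem choose_sub_le_choose_sub_add_mul (n a : ℕ) {k m : ℕ} (hkm : k ≤ m) :
    (n - k).choose (a + 1) ≤ (n - m).choose (a + 1) + (m - k) * (n - 1).choose a := by
  induction m, hkm using Nat.le_induction with
  | base => simp
  | succ m hkm ih =>
    have hstep := choose_sub_le_choose_sub_succ_add n a m
    rw [Nat.sub_add_comm hkm, Nat.add_mul, one_mul]
    omega

end Nat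

section ChooseRatio

variable {n a : ℕ}

theorem choose_sub_div_choose_eq (ha : 0 < a) (han : a ≤ n) (k : ℕ) :
    ((n - a).choose k : ℝ) / n.choose k = (n - k).choose a / n.choose a := by
  have hna : (n.choose a : ℝ) ≠ 0 := by exact_mod_cast (Nat.choose_pos han).ne'
  rcases le_or_gt k n with hkn | hnk
  · have hnk : (n.choose k : ℝ) ≠ 0 := by exact_mod_cast (Nat.choose_pos hkn).ne'
    rw [div_eq_div_iff hnk hna]
    exact_mod_cast Nat.choose_sub_mul_choose n a k
  · rw [Nat.choose_eq_zero_of_lt (by omega : n - a < k), Nat.sub_eq_zero_of_le hnk.le,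
      Nat.choose_eq_zero_of_lt ha]
    simp

theorem choose_sub_div_choose_antitone (ha : 0 < a) (han : a ≤ n) :
    Antitone fun k ↦ ((n - a).choose k : ℝ) / n.choose k := by
  intro j k hjk
  simp only [choose_sub_div_choose_eq ha han]
  gcongr

theorem choose_sub_div_choose_le_add (ha : 0 < a) (han : a ≤ n) {k m : ℕ} (hkm : k ≤ m) :
    ((n - a).choose k : ℝ) / n.choose k ≤
      (n - a).choose m / n.choose m + (m - k : ℝ) * (a / n) := by
  obtain ⟨b, rfl⟩ : ∃ b, a = b + 1 := ⟨a - 1, by omega⟩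
  have hn : (n : ℝ) ≠ 0 := by exact_mod_cast (ha.trans_le han).ne'
  have hpos : (0 : ℝ) < n.choose (b + 1) := by exact_mod_cast Nat.choose_pos han
  have hslope : ((n - 1).choose b : ℝ) = n.choose (b + 1) * ((b + 1 : ℕ) / n) := by
    have h := Nat.add_one_mul_choose_eq (n - 1) b
    rw [Nat.sub_add_cancel (ha.trans_le han)] at h
    field_simp
    exact_mod_cast (mul_comm _ _).trans h
  have htel : ((n - k).choose (b + 1) : ℝ) ≤
      (n - m).choose (b + 1) + ((m - k : ℕ) : ℝ) * (n - 1).choose b := by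
    exact_mod_cast Nat.choose_sub_le_choose_sub_add_mul n b hkm
  rw [Nat.cast_sub hkm, hslope] at htel
  simp only [choose_sub_div_choose_eq ha han]
  rw [div_add' _ _ _ hpos.ne', div_le_div_iff_of_pos_right hpos]
  linarith

end ChooseRatio

theorem stmt_8_general (n : ℕ) (α : ℝ)
    (a m : ℕ) (ha0 : 0 < a)
    (ha : (a : ℝ) = α * n) (hm : (m : ℝ) = 1 / α)
    (k : ℕ) :
    min (α * k) 1 - 1 + ((n - a).choose k : ℝ) / (n.choose k : ℝ) ≤
      ((n - a).choose m : ℝ) / (n.choose m : ℝ) := by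
  obtain ⟨hα0, hn0⟩ : α ≠ 0 ∧ (n : ℝ) ≠ 0 := mul_ne_zero_iff.mp (ha ▸ by positivity)
  have hαm : α * m = 1 := by rw [hm, mul_one_div_cancel hα0]
  have hα : α = a / n := by rw [ha]; field_simp
  have hαpos : 0 < α := hα ▸ by positivity
  have han : a ≤ n := by
    have hamn : a * m = n := by
      exact_mod_cast show (a : ℝ) * m = n by rw [ha, mul_right_comm, hαm, one_mul]
    have hm0 : m ≠ 0 := by rintro rfl; simp at hαm
    exact hamn ▸ Nat.le_mul_of_pos_right a (Nat.pos_of_ne_zero hm0)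
  rcases le_total m k with hmk | hkm
  · have hmin : min (α * k) 1 = 1 :=
      min_eq_right (hαm ▸ mul_le_mul_of_nonneg_left (by exact_mod_cast hmk) hαpos.le)
    rw [hmin, sub_self, zero_add]
    exact choose_sub_div_choose_antitone ha0 han hmk
  · have hmin : min (α * k) 1 = α * k :=
      min_eq_left (hαm ▸ mul_le_mul_of_nonneg_left (by exact_mod_cast hkm) hαpos.le)
    have hstep := choose_sub_div_choose_le_add ha0 han hkm
    rw [← hα] at hstep
    rw [hmin]
    linarith

/-- For `α ∈ (0,1)` with `αn ∈ ℤ` and `m = 1/α ∈ ℤ`, and every `0 ≤ k ≤ n`: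
`min(αk, 1) − 1 + C(n − αn, k)/C(n, k) ≤ C(n − αn, m)/C(n, m)`. -/
theorem stmt_8 (n : ℕ) (hn : 0 < n) (α : ℝ) (hα : α ∈ Set.Ioo (0 : ℝ) 1)
    (a m : ℕ) (ha0 : 0 < a) (hm0 : 0 < m)
    (ha : (a : ℝ) = α * n) (hm : (m : ℝ) = 1 / α)
    (k : ℕ) (hk : k ≤ n) :
    min (α * k) 1 - 1 + ((n - a).choose k : ℝ) / (n.choose k : ℝ) ≤
      ((n - a).choose m : ℝ) / (n.choose m : ℝ) :=
  stmt_8_general n α a m ha0 ha hm k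
end

section
/- Let Ω be a finite nonempty set, ρ a probability distribution on Ω, G a perturbation graph on Ω, and α ∈ [0,1]. For every distortion-free watermarking scheme 𝒫 of ρ with Type I error α(𝒫) ≤ α, the robust Type II error of 𝒫 with respect to G is at least 1 − V, where V = sup{ Σ_{y∈Ω} ρ(y)·x(y) : x : Ω → [0,1] such that Σ_{y∈in(z)} ρ(y)·x(y) ≤ α for every z ∈ Ω }. -/
/-!
Let `q y = P(X = y, out(y) ⊆ R)`. Then `x y := q y / ρ y` is feasible for the linear program
defining `V`: for each `z`, every `y ∈ in(z)` with `out(y) ⊆ R` has `z ∈ R`,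
so `∑_{y ∈ in(z)} q y ≤ P(z ∈ R) ≤ α`. Hence `1 - V ≤ 1 - ∑ q`, and `1 - ∑ q` is exactly the robust Type II error.
-/

open Finset

noncomputable section

/-- The robust Type II error of a scheme `P` with respect to a perturbation
relation `E`: the probability that some allowed perturbation of `X`
(an element of `out(X)`) falls outside the rejection region `R`. -/
def robustTypeII {Ω : Type*} [Fintype Ω] [DecidableEq Ω]
    (E : Ω → Ω → Prop) [DecidableRel E] (P : Ω × Finset Ω → ℝ) : ℝ :=
  ∑ p : Ω × Finset Ω, if ¬ (univ.filter (fun w => E p.1 w) ⊆ p.2) then P p else 0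

theorem bddAbove_weighted_sums {Ω : Type*} [Fintype Ω] {ρ : Ω → ℝ} (hρ0 : ∀ y, 0 ≤ ρ y)
    (C : (Ω → ℝ) → Prop) :
    BddAbove {s : ℝ | ∃ x : Ω → ℝ, (∀ y, x y ∈ Set.Icc (0 : ℝ) 1) ∧ C x ∧
      s = ∑ y, ρ y * x y} := by
  refine ⟨∑ y, ρ y, ?_⟩
  rintro _ ⟨x, hx, -, rfl⟩
  exact sum_le_sum fun y _ => mul_le_of_le_one_right (hρ0 y) (hx y).2

theorem div_mem_Icc_zero_one {q r : ℝ} (hq : 0 ≤ q) (hqr : q ≤ r) : q / r ∈ Set.Icc (0 : ℝ) 1 :=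
  ⟨div_nonneg hq (hq.trans hqr), div_le_one_of_le₀ hqr (hq.trans hqr)⟩

section
variable {Ω : Type*} [Fintype Ω] [DecidableEq Ω]

def robustDetection (E : Ω → Ω → Prop) [DecidableRel E] (P : Ω × Finset Ω → ℝ) (y : Ω) : ℝ :=
  ∑ R : Finset Ω, if univ.filter (fun w => E y w) ⊆ R then P (y, R) else 0

variable (E : Ω → Ω → Prop) [DecidableRel E] {P : Ω × Finset Ω → ℝ}

theorem robustDetection_nonneg (hP0 : ∀ p, 0 ≤ P p) (y : Ω) : 0 ≤ robustDetection E P y :=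
  sum_nonneg fun R _ => by split_ifs <;> simp [hP0]

theorem robustDetection_le_marginal (hP0 : ∀ p, 0 ≤ P p) (y : Ω) :
    robustDetection E P y ≤ ∑ R : Finset Ω, P (y, R) :=
  sum_le_sum fun R _ => by split_ifs <;> simp [hP0]

theorem sum_robustDetection_add_robustTypeII (P : Ω × Finset Ω → ℝ) :
    ∑ y, robustDetection E P y + robustTypeII E P = ∑ p, P p := by
  rw [robustTypeII]
  simp only [robustDetection]
  rw [← Fintype.sum_prod_type', ← sum_add_distrib]
  exact sum_congr rfl fun p _ => by split_ifs <;> simp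

theorem sum_robustDetection_in_le_rejection (hP0 : ∀ p, 0 ≤ P p) (z : Ω) :
    ∑ y ∈ univ.filter (fun y => E y z), robustDetection E P y
      ≤ ∑ p : Ω × Finset Ω, if z ∈ p.2 then P p else 0 := by
  have hterm : ∀ y R, 0 ≤ if z ∈ R then P (y, R) else 0 := fun y R => by
    split_ifs <;> simp [hP0]
  calc ∑ y ∈ univ.filter (fun y => E y z), robustDetection E P y
      ≤ ∑ y ∈ univ.filter (fun y => E y z), ∑ R : Finset Ω, if z ∈ R then P (y, R) else 0 := by
        refine sum_le_sum fun y hy => sum_le_sum fun R _ => ?_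
        split_ifs with hsub hz
        · rfl
        · exact absurd (hsub (by simpa using hy)) hz
        · exact hP0 _
        · rfl
    _ ≤ ∑ y, ∑ R : Finset Ω, if z ∈ R then P (y, R) else 0 :=
        sum_le_sum_of_subset_of_nonneg (filter_subset _ _)
          fun y _ _ => sum_nonneg fun R _ => hterm y R
    _ = ∑ p : Ω × Finset Ω, if z ∈ p.2 then P p else 0 := (Fintype.sum_prod_type' _).symm

end

theorem stmt_9_general {Ω : Type*} [Fintype Ω] [DecidableEq Ω]
    (ρ : Ω → ℝ)
    (E : Ω → Ω → Prop) [DecidableRel E]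
    (α : ℝ)
    (P : Ω × Finset Ω → ℝ) (hP0 : ∀ p, 0 ≤ P p) (hP1 : ∑ p, P p = 1)
    (hmarg : ∀ x : Ω, (∑ R : Finset Ω, P (x, R)) = ρ x)
    (htypeI : ∀ y : Ω, (∑ p : Ω × Finset Ω, if y ∈ p.2 then P p else 0) ≤ α) :
    1 - sSup {s : ℝ | ∃ x : Ω → ℝ, (∀ y, x y ∈ Set.Icc (0 : ℝ) 1) ∧
        (∀ z : Ω, (∑ y ∈ univ.filter (fun y => E y z), ρ y * x y) ≤ α) ∧
        s = ∑ y, ρ y * x y}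
      ≤ robustTypeII E P := by
  set q := robustDetection E P
  have hq0 : ∀ y, 0 ≤ q y := robustDetection_nonneg E hP0
  have hqρ : ∀ y, q y ≤ ρ y := fun y => hmarg y ▸ robustDetection_le_marginal E hP0 y
  have hρq : ∀ y, ρ y * (q y / ρ y) = q y := fun y =>
    mul_div_cancel_of_imp' fun h => le_antisymm (h ▸ hqρ y) (hq0 y)
  have hfeasible : ∑ y, q y ∈ {s : ℝ | ∃ x : Ω → ℝ, (∀ y, x y ∈ Set.Icc (0 : ℝ) 1) ∧
      (∀ z : Ω, (∑ y ∈ univ.filter (fun y => E y z), ρ y * x y) ≤ α) ∧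
      s = ∑ y, ρ y * x y} :=
    ⟨fun y => q y / ρ y, fun y => div_mem_Icc_zero_one (hq0 y) (hqρ y),
      fun z => by simpa only [hρq] using (sum_robustDetection_in_le_rejection E hP0 z).trans (htypeI z),
      by simp only [hρq]⟩
  have hρ0 : ∀ y, 0 ≤ ρ y := fun y => (hq0 y).trans (hqρ y)
  have hle := le_csSup (bddAbove_weighted_sums hρ0 _) hfeasible
  linarith [sum_robustDetection_add_robustTypeII E P]

/-- Every distortion-free watermarking scheme of `ρ` with Type I error `≤ α`
has robust Type II error (w.r.t. the perturbation graph `E`) at least `1 − V`,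
where `V = sup { ∑_y ρ(y)·x(y) : x : Ω → [0,1], ∑_{y ∈ in(z)} ρ(y)·x(y) ≤ α ∀ z }`. -/
theorem stmt_9 {Ω : Type*} [Fintype Ω] [DecidableEq Ω] [Nonempty Ω]
    (ρ : Ω → ℝ) (hρ0 : ∀ x, 0 ≤ ρ x) (hρ1 : ∑ x, ρ x = 1)
    (E : Ω → Ω → Prop) [DecidableRel E] (hrefl : ∀ u, E u u)
    (α : ℝ) (hα : α ∈ Set.Icc (0 : ℝ) 1)
    (P : Ω × Finset Ω → ℝ) (hP0 : ∀ p, 0 ≤ P p) (hP1 : ∑ p, P p = 1)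
    (hmarg : ∀ x : Ω, (∑ R : Finset Ω, P (x, R)) = ρ x)
    (htypeI : ∀ y : Ω, (∑ p : Ω × Finset Ω, if y ∈ p.2 then P p else 0) ≤ α) :
    1 - sSup {s : ℝ | ∃ x : Ω → ℝ, (∀ y, x y ∈ Set.Icc (0 : ℝ) 1) ∧
        (∀ z : Ω, (∑ y ∈ univ.filter (fun y => E y z), ρ y * x y) ≤ α) ∧
        s = ∑ y, ρ y * x y}
      ≤ robustTypeII E P :=
  stmt_9_general ρ E α P hP0 hP1 hmarg htypeI
end
end

section
/- Let Ω be a finite nonempty set, ρ a probability distribution on Ω, G a perturbation graph on Ω, and α ∈ [0,1]. Let x : Ω → [0,1] satisfy Σ_{y∈in(z)} ρ(y)·x(y) ≤ α for every z ∈ Ω. Then the joint distribution 𝒫 on Ω × 2^Ω defined by 𝒫(X = y, R = out(y)) = ρ(y)·x(y), 𝒫(X = y, R = ∅) = ρ(y)·(1 − x(y)), and 𝒫 = 0 on all other pairs, is a distortion-free watermarking scheme of ρ with Type I error at most α and with robust Type II error with respect to G equal to 1 − Σ_{y∈Ω} ρ(y)·x(y). -/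
/-!
The scheme puts all of `ρ(y)` on two rejection regions, `out(y)` and `∅`, which are distinct
because `y ∈ out(y)`. Hence every sum over the regions of a fixed output `y` collapses to two
terms: the fibre sums to `ρ(y)x(y) + ρ(y)(1 - x(y)) = ρ(y)`; a point `z` lies in `out(y)` exactly
when `y ∈ in(z)`, so the Type I error at `z` is the feasibility sum `∑_{y ∈ in(z)} ρ(y)x(y) ≤ α`;
and `out(y)` is never perturbed out of `out(y)` but always out of `∅`, so the robust Type II error
is `∑_y ρ(y)(1 - x(y))`.
-/

open Finset

noncomputable section

section TwoPoint

variable {β M : Type*} [Fintype β] [DecidableEq β] [AddCommMonoid M] {s t : β}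

theorem sum_ite_ite_eq_of_ne (hst : s ≠ t) (q : β → Prop) [DecidablePred q] (a b : M) :
    ∑ r, (if q r then (if r = s then a else if r = t then b else 0) else 0) =
      (if q s then a else 0) + (if q t then b else 0) := by
  have hsplit : ∀ r, (if q r then (if r = s then a else if r = t then b else 0) else 0) =
      (if r = s then (if q s then a else 0) else 0) +
        (if r = t then (if q t then b else 0) else 0) := by
    intro r
    by_cases hs : r = s
    · subst hs; simp [hst]
    · by_cases ht : r = t
      · subst ht; simp [hs]
      · simp [hs, ht]
  simp only [hsplit, sum_add_distrib, sum_ite_eq', mem_univ, if_true]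

end TwoPoint

section TwoRegionScheme

variable {Ω : Type*} [Fintype Ω] {E : Ω → Ω → Prop} [DecidableRel E]

theorem filter_ne_empty_of_refl (hrefl : ∀ u, E u u) (z : Ω) :
    univ.filter (fun w => E z w) ≠ ∅ :=
  nonempty_iff_ne_empty.1 ⟨z, by simp [hrefl z]⟩

variable [DecidableEq Ω]

variable (E) in
def twoRegionScheme (a b : Ω → ℝ) (p : Ω × Finset Ω) : ℝ :=
  if p.2 = univ.filter (fun w => E p.1 w) then a p.1 else if p.2 = ∅ then b p.1 else 0

theorem twoRegionScheme_nonneg {a b : Ω → ℝ} (ha : ∀ y, 0 ≤ a y) (hb : ∀ y, 0 ≤ b y)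
    (p : Ω × Finset Ω) : 0 ≤ twoRegionScheme E a b p := by
  unfold twoRegionScheme
  split_ifs
  exacts [ha _, hb _, le_rfl]

variable (hrefl : ∀ u, E u u) (a b : Ω → ℝ)
include hrefl

theorem sum_ite_twoRegionScheme (y : Ω) (q : Finset Ω → Prop) [DecidablePred q] :
    ∑ R, (if q R then twoRegionScheme E a b (y, R) else 0) =
      (if q (univ.filter (fun w => E y w)) then a y else 0) + (if q ∅ then b y else 0) :=
  sum_ite_ite_eq_of_ne (filter_ne_empty_of_refl hrefl y) q (a y) (b y)

theorem sum_twoRegionScheme (y : Ω) :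
    ∑ R, twoRegionScheme E a b (y, R) = a y + b y := by
  simpa using sum_ite_twoRegionScheme hrefl a b y (fun _ => True)

theorem typeI_twoRegionScheme (y : Ω) :
    ∑ p : Ω × Finset Ω, (if y ∈ p.2 then twoRegionScheme E a b p else 0) =
      ∑ z ∈ univ.filter (fun z => E z y), a z := by
  rw [Fintype.sum_prod_type, sum_filter]
  refine sum_congr rfl fun z _ => ?_
  simpa using sum_ite_twoRegionScheme hrefl a b z (fun R => y ∈ R)

theorem robustTypeII_twoRegionScheme :
    robustTypeII E (twoRegionScheme E a b) = ∑ y, b y := by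
  unfold robustTypeII
  rw [Fintype.sum_prod_type]
  refine sum_congr rfl fun y _ => ?_
  simpa [subset_empty, filter_ne_empty_of_refl hrefl y] using
    sum_ite_twoRegionScheme hrefl a b y (fun R => ¬ univ.filter (fun w => E y w) ⊆ R)

end TwoRegionScheme

theorem stmt_10_general {Ω : Type*} [Fintype Ω] [DecidableEq Ω]
    (ρ : Ω → ℝ) (hρ0 : ∀ x, 0 ≤ ρ x) (hρ1 : ∑ x, ρ x = 1)
    (E : Ω → Ω → Prop) [DecidableRel E] (hrefl : ∀ u, E u u)
    (α : ℝ)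
    (x : Ω → ℝ) (hx01 : ∀ y, x y ∈ Set.Icc (0 : ℝ) 1)
    (hxfeas : ∀ z : Ω, (∑ y ∈ univ.filter (fun y => E y z), ρ y * x y) ≤ α)
    (P : Ω × Finset Ω → ℝ)
    (hPdef : P = fun p =>
      if p.2 = univ.filter (fun w => E p.1 w) then ρ p.1 * x p.1
      else if p.2 = ∅ then ρ p.1 * (1 - x p.1)
      else 0) :
    (∀ p, 0 ≤ P p) ∧ (∑ p, P p = 1) ∧
    (∀ y : Ω, (∑ R : Finset Ω, P (y, R)) = ρ y) ∧
    (∀ y : Ω, (∑ p : Ω × Finset Ω, if y ∈ p.2 then P p else 0) ≤ α) ∧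
    robustTypeII E P = 1 - ∑ y, ρ y * x y := by
  obtain rfl : P = twoRegionScheme E (fun y => ρ y * x y) (fun y => ρ y * (1 - x y)) := hPdef
  have hmarginal : ∀ y, ∑ R, twoRegionScheme E (fun y => ρ y * x y)
      (fun y => ρ y * (1 - x y)) (y, R) = ρ y := fun y => by
    rw [sum_twoRegionScheme hrefl]
    ring
  refine ⟨twoRegionScheme_nonneg (fun y => mul_nonneg (hρ0 y) (hx01 y).1)
      (fun y => mul_nonneg (hρ0 y) (sub_nonneg.2 (hx01 y).2)), ?_, hmarginal,
    fun y => (typeI_twoRegionScheme hrefl _ _ y).trans_le (hxfeas y), ?_⟩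
  · rw [Fintype.sum_prod_type, sum_congr rfl fun y _ => hmarginal y, hρ1]
  · rw [robustTypeII_twoRegionScheme hrefl]
    simp only [mul_one_sub, sum_sub_distrib, hρ1]

/-- Given a feasible `x : Ω → [0,1]` for the linear program, the scheme
`𝒫(X = y, R = out(y)) = ρ(y)·x(y)`, `𝒫(X = y, R = ∅) = ρ(y)·(1 − x(y))` is a
distortion-free watermarking scheme of `ρ` with Type I error at most `α` and
robust Type II error `1 − ∑_y ρ(y)·x(y)`. -/
theorem stmt_10 {Ω : Type*} [Fintype Ω] [DecidableEq Ω] [Nonempty Ω]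
    (ρ : Ω → ℝ) (hρ0 : ∀ x, 0 ≤ ρ x) (hρ1 : ∑ x, ρ x = 1)
    (E : Ω → Ω → Prop) [DecidableRel E] (hrefl : ∀ u, E u u)
    (α : ℝ) (hα : α ∈ Set.Icc (0 : ℝ) 1)
    (x : Ω → ℝ) (hx01 : ∀ y, x y ∈ Set.Icc (0 : ℝ) 1)
    (hxfeas : ∀ z : Ω, (∑ y ∈ univ.filter (fun y => E y z), ρ y * x y) ≤ α)
    (P : Ω × Finset Ω → ℝ)
    (hPdef : P = fun p =>
      if p.2 = univ.filter (fun w => E p.1 w) then ρ p.1 * x p.1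
      else if p.2 = ∅ then ρ p.1 * (1 - x p.1)
      else 0) :
    (∀ p, 0 ≤ P p) ∧ (∑ p, P p = 1) ∧
    (∀ y : Ω, (∑ R : Finset Ω, P (y, R)) = ρ y) ∧
    (∀ y : Ω, (∑ p : Ω × Finset Ω, if y ∈ p.2 then P p else 0) ≤ α) ∧
    robustTypeII E P = 1 - ∑ y, ρ y * x y :=
  stmt_10_general ρ hρ0 hρ1 E hrefl α x hx01 hxfeas P hPdef
end
end

section
/- Let ρ be a probability distribution on a finite nonempty set Ω with Shannon entropy h := H(ρ) and q := max_{x∈Ω} ρ(x). If q ≥ 1/2 and 0 < h < log 2, then 1 − q ≤ h / log((log 2)/h). -/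
/-!
Let `x₀` carry the maximal mass `q` and put `t = 1 - q`. Every other point has mass at most `t`,
so those points alone contribute at least `-t log t` to the entropy: `h ≥ -t log t`. Taking
logarithms, `log h ≥ log t + log (-log t) ≥ log t + log log 2` because `t ≤ 1/2`; hence
`t log (log 2 / h) ≤ -t log t ≤ h`.
-/

open Finset

noncomputable section

/-- Shannon entropy (in nats) of a finitely supported distribution, with
the convention `0 · log 0 = 0` (note `Real.log 0 = 0`). -/
def shannonEntropy {Ω : Type*} [Fintype Ω] (ρ : Ω → ℝ) : ℝ :=
  ∑ x, -(ρ x * Real.log (ρ x))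

namespace Real

lemma negMulLog_sum_le_sum_negMulLog {ι : Type*} (s : Finset ι) (f : ι → ℝ)
    (hf : ∀ i ∈ s, 0 ≤ f i) : negMulLog (∑ i ∈ s, f i) ≤ ∑ i ∈ s, negMulLog (f i) := by
  rw [negMulLog, neg_mul, ← mul_neg, sum_mul]
  refine sum_le_sum fun i hi => ?_
  rcases (hf i hi).eq_or_lt with hzero | hpos
  · simp [← hzero]
  · have hlog : log (f i) ≤ log (∑ j ∈ s, f j) := log_le_log hpos (single_le_sum hf hi)
    rw [negMulLog]
    nlinarith

lemma le_div_log_log_two_div_of_negMulLog_le {t a : ℝ} (ht0 : 0 ≤ t) (ht : t ≤ 1 / 2)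
    (ha0 : 0 < a) (ha : a < log 2) (hta : negMulLog t ≤ a) :
    t ≤ a / log (log 2 / a) := by
  have hlog2 : 0 < log 2 := log_pos one_lt_two
  have hpos : 0 < log (log 2 / a) := log_pos ((one_lt_div ha0).2 ha)
  rw [le_div_iff₀ hpos]
  rcases ht0.eq_or_lt with rfl | htpos
  · simpa using ha0.le
  have hlogt : log 2 ≤ -log t := by
    have := log_le_log htpos ht
    rwa [one_div, log_inv, le_neg] at this
  have hlog_a : log t + log (log 2) ≤ log a := by
    calc log t + log (log 2) ≤ log t + log (-log t) := by gcongr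
      _ = log (negMulLog t) := by
        rw [negMulLog, neg_mul, neg_mul_eq_mul_neg, log_mul htpos.ne' (by linarith)]
      _ ≤ log a := log_le_log (by rw [negMulLog]; nlinarith) hta
  calc t * log (log 2 / a) = t * (log (log 2) - log a) := by
        rw [log_div hlog2.ne' ha0.ne']
    _ ≤ t * -log t := by gcongr; linarith
    _ = negMulLog t := by rw [negMulLog]; ring
    _ ≤ a := hta

end Real

lemma negMulLog_one_sub_le_shannonEntropy {Ω : Type*} [Fintype Ω] [DecidableEq Ω] (ρ : Ω → ℝ)
    (hρ0 : ∀ x, 0 ≤ ρ x) (hρ1 : ∑ x, ρ x = 1) (x₀ : Ω) :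
    Real.negMulLog (1 - ρ x₀) ≤ shannonEntropy ρ := by
  have hrest : ∑ x ∈ univ.erase x₀, ρ x = 1 - ρ x₀ := by
    rw [← hρ1, ← add_sum_erase _ _ (mem_univ x₀), add_sub_cancel_left]
  have hx₀ : 0 ≤ Real.negMulLog (ρ x₀) :=
    Real.negMulLog_nonneg (hρ0 x₀) (hρ1 ▸ single_le_sum (fun x _ => hρ0 x) (mem_univ x₀))
  calc Real.negMulLog (1 - ρ x₀) ≤ ∑ x ∈ univ.erase x₀, Real.negMulLog (ρ x) :=
        hrest ▸ Real.negMulLog_sum_le_sum_negMulLog _ ρ fun x _ => hρ0 x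
    _ ≤ Real.negMulLog (ρ x₀) + ∑ x ∈ univ.erase x₀, Real.negMulLog (ρ x) := by linarith
    _ = shannonEntropy ρ := by
        rw [add_sum_erase univ (fun x => Real.negMulLog (ρ x)) (mem_univ x₀), shannonEntropy,
          Real.negMulLog_eq_neg]

theorem stmt_13_general {Ω : Type*} [Fintype Ω]
    (ρ : Ω → ℝ) (hρ0 : ∀ x, 0 ≤ ρ x) (hρ1 : ∑ x, ρ x = 1)
    (h : ℝ) (hent : shannonEntropy ρ = h) (hh0 : 0 < h) (hh1 : h < Real.log 2)
    (q : ℝ) (hqmem : ∃ x, ρ x = q)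
    (hq : 1 / 2 ≤ q) :
    1 - q ≤ h / Real.log (Real.log 2 / h) := by
  classical
  obtain ⟨x₀, rfl⟩ := hqmem
  have hq1 : ρ x₀ ≤ 1 := hρ1 ▸ single_le_sum (fun x _ => hρ0 x) (mem_univ x₀)
  exact Real.le_div_log_log_two_div_of_negMulLog_le (by linarith) (by linarith) hh0 hh1
    (hent ▸ negMulLog_one_sub_le_shannonEntropy ρ hρ0 hρ1 x₀)

/-- If `q = max_x ρ(x) ≥ 1/2` and `0 < h = H(ρ) < log 2`, then
`1 − q ≤ h / log((log 2)/h)`. -/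
theorem stmt_13 {Ω : Type*} [Fintype Ω] [Nonempty Ω]
    (ρ : Ω → ℝ) (hρ0 : ∀ x, 0 ≤ ρ x) (hρ1 : ∑ x, ρ x = 1)
    (h : ℝ) (hent : shannonEntropy ρ = h) (hh0 : 0 < h) (hh1 : h < Real.log 2)
    (q : ℝ) (hqmax : ∀ x, ρ x ≤ q) (hqmem : ∃ x, ρ x = q)
    (hq : 1 / 2 ≤ q) :
    1 - q ≤ h / Real.log (Real.log 2 / h) :=
  stmt_13_general ρ hρ0 hρ1 h hent hh0 hh1 q hqmem hq
end
end

section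
/- Let ρ be a probability distribution on a finite set Ω with |Ω| = k ≥ 2, Shannon entropy h := H(ρ) > 0, and q := max_{x∈Ω} ρ(x) ≥ 1/2. Then 1 − q ≥ h / (9·log(9k·log(9k)/h)). -/
/-!
Write `t = 1 - ρ x₀` for an atom `x₀`. Since `-q log q ≤ 1 - q` and, by Jensen's inequality for
the concave function `-x log x`, the remaining mass `t` spread over fewer than `k` points carries
entropy at most `t log (k / t)`, we get `h ≤ g t` with `g t = t (1 + log (k / t))`. The function `g`
is increasing on `(0, k]`, and a direct computation shows `g (h / (9 L)) < h` for
`L = log (9k log (9k) / h)`, so `t ≥ h / (9 L)`.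
-/

open Finset

noncomputable section

open Real

lemma sum_negMulLog_le_mul_log_card_div {ι : Type*} (s : Finset ι) (p : ι → ℝ)
    (hp : ∀ i ∈ s, 0 ≤ p i) :
    ∑ i ∈ s, negMulLog (p i) ≤ (∑ i ∈ s, p i) * log (#s / ∑ i ∈ s, p i) := by
  rcases s.eq_empty_or_nonempty with rfl | hs
  · simp
  have hn : (0 : ℝ) < #s := by exact_mod_cast hs.card_pos
  have hjensen := concaveOn_negMulLog.le_map_sum (t := s) (w := fun _ ↦ 1 / (#s : ℝ)) (p := p)
    (fun _ _ ↦ by positivity) (by simp [hn.ne']) (fun i hi ↦ Set.mem_Ici.mpr (hp i hi))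
  simp only [smul_eq_mul, ← mul_sum] at hjensen
  rw [← inv_div, log_inv]
  calc ∑ i ∈ s, negMulLog (p i) = #s * (1 / #s * ∑ i ∈ s, negMulLog (p i)) := by field_simp
    _ ≤ #s * negMulLog (1 / #s * ∑ i ∈ s, p i) := by gcongr
    _ = (∑ i ∈ s, p i) * -log ((∑ i ∈ s, p i) / #s) := by
      rw [negMulLog, one_div_mul_eq_div]; field_simp

lemma sum_negMulLog_le_mul_log_div {ι : Type*} {s : Finset ι} {p : ι → ℝ} {n : ℝ}
    (hp : ∀ i ∈ s, 0 ≤ p i) (hn : (#s : ℝ) ≤ n) :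
    ∑ i ∈ s, negMulLog (p i) ≤ (∑ i ∈ s, p i) * log (n / ∑ i ∈ s, p i) := by
  have hjensen := sum_negMulLog_le_mul_log_card_div s p hp
  rcases (sum_nonneg hp).eq_or_lt with ht | ht
  · simpa [← ht] using hjensen
  have hs : (0 : ℝ) < #s := by exact_mod_cast (nonempty_of_sum_ne_zero ht.ne').card_pos
  exact hjensen.trans <| mul_le_mul_of_nonneg_left
    (log_le_log (by positivity) (div_le_div_of_nonneg_right hn ht.le)) ht.le

section Entropy

variable {Ω : Type*} [Fintype Ω] {ρ : Ω → ℝ}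

lemma shannonEntropy_eq_sum_negMulLog (ρ : Ω → ℝ) : shannonEntropy ρ = ∑ x, negMulLog (ρ x) := by
  simp [shannonEntropy, negMulLog]

lemma shannonEntropy_le_log_card (hρ0 : ∀ x, 0 ≤ ρ x) (hρ1 : ∑ x, ρ x = 1) :
    shannonEntropy ρ ≤ log (Fintype.card Ω) := by
  simpa [shannonEntropy_eq_sum_negMulLog, hρ1] using
    sum_negMulLog_le_mul_log_card_div univ ρ (fun x _ ↦ hρ0 x)

lemma shannonEntropy_le_one_sub_mul (hρ0 : ∀ x, 0 ≤ ρ x) (hρ1 : ∑ x, ρ x = 1) (x₀ : Ω) :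
    shannonEntropy ρ ≤ (1 - ρ x₀) * (1 + log (Fintype.card Ω / (1 - ρ x₀))) := by
  classical
  have hrest : ∑ x ∈ univ.erase x₀, ρ x = 1 - ρ x₀ := by
    rw [← hρ1, ← add_sum_erase _ _ (mem_univ x₀)]; ring
  have hatom := negMulLog_le_one_sub_self (hρ0 x₀)
  have hcard : (#(univ.erase x₀) : ℝ) ≤ Fintype.card Ω := by
    exact_mod_cast (card_erase_le).trans_eq card_univ
  have hspread := sum_negMulLog_le_mul_log_div (fun x _ ↦ hρ0 x) hcard
  rw [hrest] at hspread
  rw [shannonEntropy_eq_sum_negMulLog, ← add_sum_erase _ _ (mem_univ x₀)]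
  linarith

end Entropy

lemma mul_one_add_log_div_le_of_le {K s t : ℝ} (ht : 0 < t) (hts : t ≤ s) (hsK : s ≤ K) :
    t * (1 + log (K / t)) ≤ s * (1 + log (K / s)) := by
  have hs : 0 < s := ht.trans_le hts
  have hK : 0 < K := hs.trans_le hsK
  have htangent : t * log (s / t) ≤ s - t := by
    have := mul_le_mul_of_nonneg_left (log_le_sub_one_of_pos (div_pos hs ht)) ht.le
    rwa [mul_sub, mul_div_cancel₀ _ ht.ne', mul_one] at this
  have hsplit : log (K / t) = log (K / s) + log (s / t) := by
    rw [← log_mul (by positivity) (by positivity)]; field_simp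
  have hlog : 0 ≤ log (K / s) := log_nonneg ((one_le_div hs).mpr hsK)
  nlinarith

def entropyGapBound (k h : ℝ) : ℝ := h / (9 * log (9 * k * log (9 * k) / h))

lemma entropyGapBound_le_and_lt {K h : ℝ} (hK : 1 ≤ K) (hh : 0 < h) (hhK : h ≤ log K) :
    entropyGapBound K h ≤ K ∧
      entropyGapBound K h * (1 + log (K / entropyGapBound K h)) < h := by
  set L₀ := log (9 * K)
  set L := log (9 * K * L₀ / h)
  have hL₀ : 1 ≤ L₀ := by
    rw [le_log_iff_exp_le (by positivity)]; linarith [exp_one_lt_d9]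
  have hhL₀ : h ≤ L₀ := hhK.trans (log_le_log (by linarith) (by linarith))
  have hL : 1 ≤ L := by
    refine hL₀.trans (log_le_log (by positivity) ?_)
    rw [le_div_iff₀ hh]
    gcongr
  set t₀ := entropyGapBound K h
  have ht₀ : t₀ = h / (9 * L) := rfl
  have ht₀h : t₀ ≤ h := div_le_self hh.le (by linarith)
  have hlogK : log (K / t₀) = L + log L - log L₀ := by
    have : K / t₀ = 9 * K * L₀ / h * L / L₀ := by rw [ht₀]; field_simp
    rw [this, log_div (by positivity) (by positivity), log_mul (by positivity) (by positivity)]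
  have hlogL : log L ≤ L - 1 := log_le_sub_one_of_pos (by linarith)
  have hlogL₀ : 0 ≤ log L₀ := log_nonneg hL₀
  have ht₀pos : 0 < t₀ := by rw [ht₀]; positivity
  refine ⟨by linarith [log_le_sub_one_of_pos (by linarith : 0 < K)], ?_⟩
  calc t₀ * (1 + log (K / t₀)) ≤ t₀ * (2 * L) := by gcongr; linarith
    _ < t₀ * (9 * L) := by gcongr; linarith
    _ = h := by rw [ht₀]; field_simp

theorem stmt_14_general {Ω : Type*} [Fintype Ω]
    (ρ : Ω → ℝ) (hρ0 : ∀ x, 0 ≤ ρ x) (hρ1 : ∑ x, ρ x = 1)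
    (h : ℝ) (hent : shannonEntropy ρ = h) (hh0 : 0 < h)
    (q : ℝ) (hqmem : ∃ x, ρ x = q) :
    h / (9 * Real.log (9 * (Fintype.card Ω : ℝ) *
        Real.log (9 * (Fintype.card Ω : ℝ)) / h)) ≤ 1 - q := by
  obtain ⟨x₀, rfl⟩ := hqmem
  subst hent
  have hK : (1 : ℝ) ≤ Fintype.card Ω := Nat.one_le_cast.mpr (Fintype.card_pos_iff.mpr ⟨x₀⟩)
  have hbound := shannonEntropy_le_one_sub_mul hρ0 hρ1 x₀
  have ht : 0 < 1 - ρ x₀ := by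
    have hle : ρ x₀ ≤ 1 := hρ1 ▸ single_le_sum (fun x _ ↦ hρ0 x) (mem_univ x₀)
    refine (sub_nonneg.mpr hle).lt_of_ne fun ht ↦ ?_
    rw [← ht, zero_mul] at hbound
    linarith
  obtain ⟨ht₀K, hlt⟩ := entropyGapBound_le_and_lt hK hh0 (shannonEntropy_le_log_card hρ0 hρ1)
  change entropyGapBound _ _ ≤ _
  by_contra! hcon
  linarith [mul_one_add_log_div_le_of_le ht hcon.le ht₀K]

/-- If `|Ω| = k ≥ 2`, `h = H(ρ) > 0` and `q = max_x ρ(x) ≥ 1/2`, then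
`1 − q ≥ h / (9 · log(9k·log(9k)/h))`. -/
theorem stmt_14 {Ω : Type*} [Fintype Ω]
    (hk : 2 ≤ Fintype.card Ω)
    (ρ : Ω → ℝ) (hρ0 : ∀ x, 0 ≤ ρ x) (hρ1 : ∑ x, ρ x = 1)
    (h : ℝ) (hent : shannonEntropy ρ = h) (hh0 : 0 < h)
    (q : ℝ) (hqmax : ∀ x, ρ x ≤ q) (hqmem : ∃ x, ρ x = q)
    (hq : 1 / 2 ≤ q) :
    h / (9 * Real.log (9 * (Fintype.card Ω : ℝ) *
        Real.log (9 * (Fintype.card Ω : ℝ)) / h)) ≤ 1 - q :=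
  stmt_14_general ρ hρ0 hρ1 h hent hh0 q hqmem
end
end

section
/- Let ρ be a probability distribution on a finite set Ω with |Ω| = k, and let q := max_{x∈Ω} ρ(x) with q < 1. Then H(ρ) ≤ −q·log q + (1 − q)·log(k/(1 − q)). -/
open Finset

noncomputable section

lemma aux_jensen {Ω : Type*} (s : Finset Ω) (p : Ω → ℝ)
    (h0 : ∀ x ∈ s, 0 ≤ p x) (m : ℝ) (hm : ∑ x ∈ s, p x = m) (hmpos : 0 < m) :
    ∑ x ∈ s, Real.negMulLog (p x) ≤ m * Real.log ((s.card : ℝ) / m) := by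
  have hs : s.Nonempty := by
    rcases s.eq_empty_or_nonempty with h | h
    · subst h; simp at hm; linarith
    · exact h
  have hn : (0:ℝ) < (s.card : ℝ) := by exact_mod_cast hs.card_pos
  have hw : ∑ _x ∈ s, ((s.card : ℝ))⁻¹ = 1 := by
    rw [Finset.sum_const, nsmul_eq_mul]
    field_simp
  have hj := Real.concaveOn_negMulLog.le_map_sum
    (t := s) (w := fun _ => ((s.card : ℝ))⁻¹) (p := p)
    (fun i _ => by positivity) hw (fun i hi => h0 i hi)
  have hsum : ∑ i ∈ s, ((s.card : ℝ))⁻¹ • p i = m / s.card := by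
    simp only [smul_eq_mul, ← Finset.mul_sum, hm]
    rw [div_eq_inv_mul]
  rw [hsum] at hj
  have hj' : ∑ i ∈ s, ((s.card:ℝ))⁻¹ * Real.negMulLog (p i) ≤ Real.negMulLog (m / s.card) := hj
  rw [← Finset.mul_sum] at hj'
  have h2 : ∑ i ∈ s, Real.negMulLog (p i) ≤ (s.card : ℝ) * Real.negMulLog (m / s.card) := by
    calc ∑ i ∈ s, Real.negMulLog (p i)
        = (s.card : ℝ) * (((s.card:ℝ))⁻¹ * ∑ i ∈ s, Real.negMulLog (p i)) := by
          field_simp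
      _ ≤ (s.card : ℝ) * Real.negMulLog (m / s.card) :=
          mul_le_mul_of_nonneg_left hj' hn.le
  refine h2.trans_eq ?_
  rw [Real.negMulLog, Real.log_div hmpos.ne' hn.ne', Real.log_div hn.ne' hmpos.ne']
  field_simp
  ring

/-- If `q = max_x ρ(x) < 1`, then
`H(ρ) ≤ −q·log q + (1 − q)·log(k/(1 − q))` where `k = |Ω|`. -/
theorem stmt_15 {Ω : Type*} [Fintype Ω]
    (ρ : Ω → ℝ) (hρ0 : ∀ x, 0 ≤ ρ x) (hρ1 : ∑ x, ρ x = 1)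
    (q : ℝ) (hqmax : ∀ x, ρ x ≤ q) (hqmem : ∃ x, ρ x = q) (hq1 : q < 1) :
    shannonEntropy ρ ≤
      -(q * Real.log q) + (1 - q) * Real.log ((Fintype.card Ω : ℝ) / (1 - q)) := by
  classical
  obtain ⟨x₀, hx₀⟩ := hqmem
  have h1q : (0:ℝ) < 1 - q := by linarith
  set s := Finset.univ.erase x₀ with hsdef
  have hsum' : ∑ x ∈ s, ρ x = 1 - q := by
    have h := Finset.sum_erase_add Finset.univ ρ (Finset.mem_univ x₀)
    rw [hρ1, hx₀] at h
    linarith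
  have haux := aux_jensen s ρ (fun x _ => hρ0 x) (1 - q) hsum' h1q
  have hcard : ((s.card : ℝ)) ≤ (Fintype.card Ω : ℝ) := by
    have : s.card ≤ Fintype.card Ω := by
      exact le_trans (Finset.card_le_card (Finset.erase_subset x₀ Finset.univ))
        (le_of_eq Finset.card_univ)
    exact_mod_cast this
  have hcardpos : (0:ℝ) < (s.card : ℝ) := by
    rcases s.eq_empty_or_nonempty with h | h
    · rw [h] at hsum'; simp at hsum'; linarith
    · exact_mod_cast h.card_pos
  have hlog : Real.log ((s.card : ℝ) / (1 - q)) ≤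
      Real.log ((Fintype.card Ω : ℝ) / (1 - q)) := by
    apply Real.log_le_log (by positivity)
    gcongr
  have hE : shannonEntropy ρ = -(q * Real.log q) + ∑ x ∈ s, Real.negMulLog (ρ x) := by
    rw [shannonEntropy]
    have h := Finset.sum_erase_add Finset.univ (fun x => Real.negMulLog (ρ x)) (Finset.mem_univ x₀)
    simp only [Real.negMulLog_eq_neg] at h ⊢
    rw [← h, hx₀]
    ring
  rw [hE]
  have hm := mul_le_mul_of_nonneg_left hlog h1q.le
  linarith
end
end

section
/- Let ρ be a probability distribution on a finite set Ω with |Ω| = k ≥ 2, Shannon entropy h := H(ρ) with 0 < h ≤ 1/4, and q := max_{x∈Ω} ρ(x) ≥ 1/2. Then (1 − q)·log(1/(1 − q)) ≥ h / (9 + log(9k·log(9k))). -/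
open Finset

noncomputable section

/-!
Split off an atom `x₀` of mass `q ≥ 1/2` and put `s = 1 - q`. Jensen's inequality for the concave
`negMulLog` on the remaining atoms gives `H(ρ) ≤ H_b(q) + s log k`, and `-q log q ≤ 1 - q` gives
`H_b(q) ≤ s + s log(1/s)`. If `s ≤ 1/e`, then `log(1/s) ≥ 1` and `H(ρ) ≤ (2 + log k) s log(1/s)`.
Otherwise `s log(1/s) ≥ s(1 - s) > 1/6`, and `h ≤ 1/4` is already below `9 s log(1/s)`.
-/

open Real

theorem sum_negMulLog_le {ι : Type*} (t : Finset ι) {p : ι → ℝ} (hp : ∀ i ∈ t, 0 ≤ p i) :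
    ∑ i ∈ t, negMulLog (p i) ≤ (∑ i ∈ t, p i) * log #t + negMulLog (∑ i ∈ t, p i) := by
  rcases t.eq_empty_or_nonempty with rfl | ht
  · simp
  have hn : (0 : ℝ) < #t := by exact_mod_cast ht.card_pos
  have jensen := concaveOn_negMulLog.le_map_sum (t := t) (w := fun _ ↦ (#t : ℝ)⁻¹) (p := p)
    (fun _ _ ↦ by positivity) (by simp [hn.ne']) hp
  simp only [smul_eq_mul, ← Finset.mul_sum, negMulLog_mul] at jensen
  have hinv : negMulLog (#t : ℝ)⁻¹ = (#t : ℝ)⁻¹ * log #t := by simp [negMulLog, log_inv]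
  rw [hinv] at jensen
  have := mul_le_mul_of_nonneg_left jensen hn.le
  field_simp at this
  linarith

theorem shannonEntropy_le_binEntropy_add {Ω : Type*} [Fintype Ω] [DecidableEq Ω] {ρ : Ω → ℝ}
    (hρ0 : ∀ x, 0 ≤ ρ x) (hρ1 : ∑ x, ρ x = 1) (x₀ : Ω) :
    shannonEntropy ρ ≤ binEntropy (ρ x₀) + (1 - ρ x₀) * log (Fintype.card Ω) := by
  have hrest : ∑ x ∈ univ.erase x₀, ρ x = 1 - ρ x₀ := by
    rw [← hρ1, ← add_sum_erase univ ρ (mem_univ x₀)]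
    ring
  have hcard : log #(univ.erase x₀) ≤ log (Fintype.card Ω) := by
    rcases Nat.eq_zero_or_pos #(univ.erase x₀) with h0 | hpos
    · rw [h0, Nat.cast_zero, log_zero]
      exact log_natCast_nonneg _
    · exact log_le_log (by exact_mod_cast hpos) (by exact_mod_cast card_le_univ _)
  have hsplit := sum_negMulLog_le (univ.erase x₀) (p := ρ) (fun x _ ↦ hρ0 x)
  rw [hrest] at hsplit
  have hs : 0 ≤ 1 - ρ x₀ := hrest ▸ sum_nonneg fun x _ ↦ hρ0 x
  calc shannonEntropy ρ = negMulLog (ρ x₀) + ∑ x ∈ univ.erase x₀, negMulLog (ρ x) := by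
        rw [shannonEntropy, ← add_sum_erase _ _ (mem_univ x₀)]
        simp only [negMulLog, neg_mul]
    _ ≤ binEntropy (ρ x₀) + (1 - ρ x₀) * log (Fintype.card Ω) := by
        rw [binEntropy_eq_negMulLog_add_negMulLog_one_sub]
        nlinarith [mul_le_mul_of_nonneg_left hcard hs]

theorem self_le_negMulLog {s : ℝ} (hs0 : 0 ≤ s) (hs : s ≤ exp (-1)) : s ≤ negMulLog s := by
  rcases hs0.eq_or_lt with rfl | hpos
  · simp
  have : log s ≤ -1 := by simpa using log_le_log hpos hs
  rw [negMulLog]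
  nlinarith

theorem mul_one_sub_le_negMulLog {s : ℝ} (hs0 : 0 ≤ s) : s * (1 - s) ≤ negMulLog s := by
  rcases hs0.eq_or_lt with rfl | hpos
  · simp
  rw [negMulLog]
  nlinarith [log_le_sub_one_of_pos hpos]

theorem le_mul_negMulLog_of_le_add {s a h C : ℝ} (hs0 : 0 ≤ s) (hs : s ≤ 1 / 2) (ha : 0 ≤ a)
    (hC : 9 + a ≤ C) (hh : h ≤ s * (1 + a) + negMulLog s) (hh1 : h ≤ 1 / 4) :
    h ≤ C * negMulLog s := by
  have hnonneg : 0 ≤ negMulLog s := negMulLog_nonneg hs0 (by linarith)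
  rcases le_or_gt s (exp (-1)) with hsmall | hlarge
  · have := self_le_negMulLog hs0 hsmall
    nlinarith
  · have : 1 / 3 < s := lt_trans (by norm_num) (exp_neg_one_gt_d9.trans hlarge)
    nlinarith [mul_one_sub_le_negMulLog hs0]

theorem log_le_log_mul_log {x : ℝ} (hx : 1 ≤ x) : log x ≤ log (9 * x * log (9 * x)) := by
  have : 1 ≤ 9 * log (9 * x) := by
    have := one_sub_inv_le_log_of_pos (by positivity : (0 : ℝ) < 9 * x)
    have : (9 * x)⁻¹ ≤ 9⁻¹ := inv_anti₀ (by norm_num) (by linarith)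
    linarith
  exact log_le_log (by linarith) (by nlinarith)

theorem stmt_16_general {Ω : Type*} [Fintype Ω]
    (ρ : Ω → ℝ) (hρ0 : ∀ x, 0 ≤ ρ x) (hρ1 : ∑ x, ρ x = 1)
    (h : ℝ) (hent : shannonEntropy ρ = h) (hh1 : h ≤ 1 / 4)
    (q : ℝ) (hqmem : ∃ x, ρ x = q)
    (hq : 1 / 2 ≤ q) :
    h / (9 + Real.log (9 * (Fintype.card Ω : ℝ) *
        Real.log (9 * (Fintype.card Ω : ℝ)))) ≤
      (1 - q) * Real.log (1 / (1 - q)) := by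
  classical
  obtain ⟨x₀, rfl⟩ := hqmem
  have hk : (1 : ℝ) ≤ Fintype.card Ω := by exact_mod_cast Fintype.card_pos (α := Ω) (h := ⟨x₀⟩)
  have hq1 : ρ x₀ ≤ 1 := hρ1 ▸ single_le_sum (fun x _ ↦ hρ0 x) (mem_univ x₀)
  have hbin : binEntropy (ρ x₀) ≤ (1 - ρ x₀) + negMulLog (1 - ρ x₀) := by
    rw [binEntropy_eq_negMulLog_add_negMulLog_one_sub]
    linarith [negMulLog_le_one_sub_self (hρ0 x₀)]
  set C := 9 + log (9 * (Fintype.card Ω : ℝ) * log (9 * (Fintype.card Ω : ℝ)))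
  have hC : 9 + log (Fintype.card Ω) ≤ C := by linarith [log_le_log_mul_log hk]
  have hmain := le_mul_negMulLog_of_le_add (s := 1 - ρ x₀) (a := log (Fintype.card Ω)) (C := C)
    (by linarith) (by linarith) (log_nonneg hk) hC
    (by linarith [hent ▸ shannonEntropy_le_binEntropy_add hρ0 hρ1 x₀]) hh1
  rw [div_le_iff₀ (by linarith [log_nonneg hk]), one_div, log_inv, mul_neg, mul_comm,
    ← neg_mul]
  exact hmain

/-- If `|Ω| = k ≥ 2`, `0 < h = H(ρ) ≤ 1/4` and `q = max_x ρ(x) ≥ 1/2`, then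
`(1 − q)·log(1/(1 − q)) ≥ h / (9 + log(9k·log(9k)))`. -/
theorem stmt_16 {Ω : Type*} [Fintype Ω]
    (hk : 2 ≤ Fintype.card Ω)
    (ρ : Ω → ℝ) (hρ0 : ∀ x, 0 ≤ ρ x) (hρ1 : ∑ x, ρ x = 1)
    (h : ℝ) (hent : shannonEntropy ρ = h) (hh0 : 0 < h) (hh1 : h ≤ 1 / 4)
    (q : ℝ) (hqmax : ∀ x, ρ x ≤ q) (hqmem : ∃ x, ρ x = q)
    (hq : 1 / 2 ≤ q) :
    h / (9 + Real.log (9 * (Fintype.card Ω : ℝ) *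
        Real.log (9 * (Fintype.card Ω : ℝ)))) ≤
      (1 - q) * Real.log (1 / (1 - q)) :=
  stmt_16_general ρ hρ0 hρ1 h hent hh1 q hqmem hq
end
end
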